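/- arXiv:2207.03849 — 5 statements merged into one kernel-verified Lean document; each statement's English description precedes it below -/
import Mathlib

section
/- Let $1 < p < \infty$ and $\alpha \in \mathbb{R}$ with $\alpha \neq p-1$. Then for every $u \in C_c^\infty(\mathbb{R}^n_+)$ (smooth compactly supported in the open upper half-space $\{x_n > 0\}$), one has $\| x_n^{(\alpha/p)-1} u \|_{L^p(\mathbb{R}^n_+)} \leq \frac{p}{|\alpha - p + 1|} \| x_n^{\alpha/p} \partial_n u \|_{L^p(\mathbb{R}^n_+)}$. -/
open Real MeasureTheory Set

lemma psi_cont {p : ℝ} (hp : 1 < p) : Continuous (fun y : ℝ => |y| ^ (p - 2) * y) := by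
  rw [continuous_iff_continuousAt]
  intro y
  rcases eq_or_ne y 0 with rfl | hy
  · have h0 : |(0:ℝ)| ^ (p - 2) * (0:ℝ) = 0 := by ring
    rw [ContinuousAt, h0]
    apply squeeze_zero_norm (a := fun y : ℝ => |y| ^ (p - 1))
    · intro y
      rcases eq_or_ne y 0 with rfl | hy
      · simp [Real.zero_rpow (by linarith : p - 1 ≠ 0)]
      · have h1 : |(|y| ^ (p - 2) * y)| = |y| ^ (p - 2) * |y| := by
          rw [abs_mul, abs_of_nonneg (Real.rpow_nonneg (abs_nonneg y) _)]
        rw [Real.norm_eq_abs, h1, show p - 1 = p - 2 + 1 by ring, Real.rpow_add_one (abs_ne_zero.mpr hy)]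
    · have : ContinuousAt (fun y : ℝ => |y| ^ (p - 1)) 0 :=
        continuous_abs.continuousAt.rpow_const (Or.inr (by linarith))
      have h2 : |(0:ℝ)| ^ (p - 1) = 0 := by
        simp [Real.zero_rpow (by linarith : p - 1 ≠ 0)]
      rw [ContinuousAt, h2] at this
      exact this
  · exact ((continuous_abs.continuousAt.rpow_const
      (Or.inl (abs_ne_zero.mpr hy))).mul continuousAt_id)

lemma abs_rpow_mul_abs {p : ℝ} (hp : 1 < p) (y : ℝ) : |y| ^ (p - 2) * |y| = |y| ^ (p - 1) := by
  rcases eq_or_ne y 0 with rfl | hy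
  · simp [Real.zero_rpow (by linarith : p - 1 ≠ 0)]
  · rw [show p - 1 = p - 2 + 1 by ring, Real.rpow_add_one (abs_ne_zero.mpr hy)]

/-- Weighted Hardy inequality on the upper half-space. -/
theorem hardy_halfspace (n : ℕ) (p α : ℝ) (hp : 1 < p) (hα : α ≠ p - 1)
    (u : ((Fin n → ℝ) × ℝ) → ℝ) (hu : ContDiff ℝ (⊤ : ℕ∞) u) (hc : HasCompactSupport u)
    (hsupp : tsupport u ⊆ {x : (Fin n → ℝ) × ℝ | 0 < x.2}) :
    (∫ x in {x : (Fin n → ℝ) × ℝ | 0 < x.2}, |x.2 ^ (α / p - 1) * u x| ^ p) ^ (1 / p) ≤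
      (p / |α - p + 1|) *
        (∫ x in {x : (Fin n → ℝ) × ℝ | 0 < x.2},
            |x.2 ^ (α / p) * fderiv ℝ u x (0, 1)| ^ p) ^ (1 / p) := by
  have hp0 : (0:ℝ) < p := by linarith
  have hp0' : p ≠ 0 := ne_of_gt hp0
  have hp1 : p - 1 ≠ 0 := by intro h; linarith [h]
  have hβ1 : α - p + 1 ≠ 0 := fun h => hα (by linarith)
  set q : ℝ := p / (p - 1) with hqdef
  have hpq : p.HolderConjugate q := Real.HolderConjugate.conjExponent hp
  have hqp : q.HolderConjugate p := hpq.symm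
  have hq0 : q ≠ 0 := hqp.ne_zero
  -- compact support bounds
  have hK : IsCompact (tsupport u) := hc
  have hScomp : IsCompact ((Prod.snd '' tsupport u) ∪ {1}) :=
    (hK.image continuous_snd).union isCompact_singleton
  have hSne : ((Prod.snd '' tsupport u) ∪ {1} : Set ℝ).Nonempty :=
    ⟨1, Set.mem_union_right _ rfl⟩
  obtain ⟨ε, hεS, hεlb⟩ := hScomp.exists_isLeast hSne
  obtain ⟨M, hMS, hMub⟩ := hScomp.exists_isGreatest hSne
  have hε0 : 0 < ε := by
    rcases hεS with h | h
    · obtain ⟨x, hx, rfl⟩ := h; exact hsupp hx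
    · rw [Set.mem_singleton_iff] at h; rw [h]; norm_num
  have hε1 : ε ≤ 1 := hεlb (Set.mem_union_right _ rfl)
  have h1M : (1:ℝ) ≤ M := hMub (Set.mem_union_right _ rfl)
  have hmem : ∀ x : (Fin n → ℝ) × ℝ, x ∈ tsupport u → ε ≤ x.2 ∧ x.2 ≤ M := fun x hx =>
    ⟨hεlb (Set.mem_union_left _ ⟨x, hx, rfl⟩), hMub (Set.mem_union_left _ ⟨x, hx, rfl⟩)⟩
  -- basic functions
  set m : ℝ → ℝ := fun t => max t ε with hmdef
  have hm_pos : ∀ t, 0 < m t := fun t => lt_max_of_lt_right hε0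
  have hm_cont : Continuous m := continuous_id.max continuous_const
  have hm_eq : ∀ t, ε ≤ t → m t = t := fun t ht => max_eq_left ht
  set du : ((Fin n → ℝ) × ℝ) → ℝ := fun x => fderiv ℝ u x (0, 1) with hdudef
  have hdu_cont : Continuous du := (hu.continuous_fderiv (by simp)).clm_apply continuous_const
  have hu_cont : Continuous u := hu.continuous
  -- vanishing off support
  have hvan : ∀ x : (Fin n → ℝ) × ℝ, x ∉ tsupport u → u x = 0 ∧ du x = 0 := by
    intro x hx
    refine ⟨image_eq_zero_of_notMem_tsupport hx, ?_⟩
    have : fderiv ℝ u x = 0 :=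
      image_eq_zero_of_notMem_tsupport (fun h => hx (tsupport_fderiv_subset ℝ h))
    simp [hdudef, this]
  have habs0 : (0:ℝ) ^ p = 0 := Real.zero_rpow hp0'
  -- main integrands
  set A : ((Fin n → ℝ) × ℝ) → ℝ := fun x => m x.2 ^ (α - p) * |u x| ^ p with hAdef
  set B : ((Fin n → ℝ) × ℝ) → ℝ :=
    fun x => m x.2 ^ (α - p + 1) * ((p * |u x| ^ (p - 2) * u x) * du x) with hBdef
  set C : ((Fin n → ℝ) × ℝ) → ℝ := fun x => m x.2 ^ α * |du x| ^ p with hCdef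
  set f : ((Fin n → ℝ) × ℝ) → ℝ := fun x => m x.2 ^ ((α - p) / q) * |u x| ^ (p - 1) with hfdef
  set g : ((Fin n → ℝ) × ℝ) → ℝ := fun x => m x.2 ^ (α / p) * |du x| with hgdef
  set F : ((Fin n → ℝ) × ℝ) → ℝ := fun x => (α - p + 1) * A x + B x with hFdef
  -- continuity
  have hmr : ∀ r : ℝ, Continuous (fun t => m t ^ r) := fun r =>
    hm_cont.rpow_const (fun t => Or.inl (hm_pos t).ne')
  have hA_cont : Continuous A :=
    ((hmr _).comp continuous_snd).mul (hu_cont.abs.rpow_const (fun x => Or.inr hp0.le))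
  have hB_cont : Continuous B := by
    refine ((hmr _).comp continuous_snd).mul (Continuous.mul ?_ hdu_cont)
    have := (psi_cont hp).comp hu_cont
    have h2 : (fun x => p * |u x| ^ (p - 2) * u x)
        = fun x => p * ((fun y : ℝ => |y| ^ (p - 2) * y) (u x)) := by
      funext x; ring
    rw [h2]
    exact continuous_const.mul this
  have hC_cont : Continuous C :=
    ((hmr _).comp continuous_snd).mul (hdu_cont.abs.rpow_const (fun x => Or.inr hp0.le))
  have hf_cont : Continuous f :=
    ((hmr _).comp continuous_snd).mul (hu_cont.abs.rpow_const (fun x => Or.inr (by linarith)))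
  have hg_cont : Continuous g := ((hmr _).comp continuous_snd).mul hdu_cont.abs
  have hF_cont : Continuous F := (continuous_const.mul hA_cont).add hB_cont
  -- compact supports
  have hsupp_sub : ∀ G : ((Fin n → ℝ) × ℝ) → ℝ,
      (∀ x, u x = 0 → du x = 0 → G x = 0) → HasCompactSupport G := by
    intro G hG
    apply hc.mono'
    intro x hx
    by_contra hxx
    exact hx (hG x (hvan x hxx).1 (hvan x hxx).2)
  have hA_hcs : HasCompactSupport A := hsupp_sub A (fun x h1 _ => by simp [hAdef, h1, habs0])
  have hB_hcs : HasCompactSupport B := hsupp_sub B (fun x h1 h2 => by simp [hBdef, h2])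
  have hC_hcs : HasCompactSupport C := hsupp_sub C (fun x _ h2 => by simp [hCdef, h2, habs0])
  have hf_hcs : HasCompactSupport f := hsupp_sub f (fun x h1 _ => by
    simp [hfdef, h1, Real.zero_rpow hp1])
  have hg_hcs : HasCompactSupport g := hsupp_sub g (fun x _ h2 => by simp [hgdef, h2])
  have hF_hcs : HasCompactSupport F := hsupp_sub F (fun x h1 h2 => by
    simp [hFdef, hAdef, hBdef, h1, h2, habs0])
  -- integrability
  have hA_int : Integrable A := hA_cont.integrable_of_hasCompactSupport hA_hcs
  have hB_int : Integrable B := hB_cont.integrable_of_hasCompactSupport hB_hcs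
  have hC_int : Integrable C := hC_cont.integrable_of_hasCompactSupport hC_hcs
  have hF_int : Integrable F := hF_cont.integrable_of_hasCompactSupport hF_hcs
  -- nonnegativity
  have hA_nonneg : ∀ x, 0 ≤ A x := fun x =>
    mul_nonneg (Real.rpow_nonneg (hm_pos _).le _) (Real.rpow_nonneg (abs_nonneg _) _)
  have hC_nonneg : ∀ x, 0 ≤ C x := fun x =>
    mul_nonneg (Real.rpow_nonneg (hm_pos _).le _) (Real.rpow_nonneg (abs_nonneg _) _)
  have hf_nonneg : ∀ x, 0 ≤ f x := fun x =>
    mul_nonneg (Real.rpow_nonneg (hm_pos _).le _) (Real.rpow_nonneg (abs_nonneg _) _)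
  have hg_nonneg : ∀ x, 0 ≤ g x := fun x =>
    mul_nonneg (Real.rpow_nonneg (hm_pos _).le _) (abs_nonneg _)
  -- the set is measurable
  have hSmeas : MeasurableSet {x : (Fin n → ℝ) × ℝ | 0 < x.2} :=
    (isOpen_lt continuous_const continuous_snd).measurableSet
  -- LHS integral equals ∫ A
  have hLHS : (∫ x in {x : (Fin n → ℝ) × ℝ | 0 < x.2}, |x.2 ^ (α / p - 1) * u x| ^ p)
      = ∫ x, A x := by
    rw [setIntegral_congr_fun hSmeas (g := A) ?_,
      setIntegral_eq_integral_of_forall_compl_eq_zero ?_]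
    · intro x hx
      have h0 : u x = 0 := (hvan x (fun h => hx (hsupp h))).1
      simp [hAdef, h0, habs0]
    · intro x hx
      dsimp only
      rcases eq_or_ne (u x) 0 with h0 | h0
      · simp [hAdef, h0, habs0]
      · have hx2 : ε ≤ x.2 := (hmem x (subset_closure h0)).1
        have hx2p : (0:ℝ) < x.2 := lt_of_lt_of_le hε0 hx2
        have hexp : (α / p - 1) * p = α - p := by field_simp
        have h1 : |x.2 ^ (α / p - 1) * u x| = x.2 ^ (α / p - 1) * |u x| := by
          rw [abs_mul, abs_of_pos (Real.rpow_pos_of_pos hx2p _)]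
        rw [h1, Real.mul_rpow (Real.rpow_pos_of_pos hx2p _).le (abs_nonneg _),
          ← Real.rpow_mul hx2p.le, hexp]
        simp only [hAdef]
        rw [hm_eq x.2 hx2]
  -- RHS integral equals ∫ C
  have hRHS : (∫ x in {x : (Fin n → ℝ) × ℝ | 0 < x.2},
      |x.2 ^ (α / p) * fderiv ℝ u x (0, 1)| ^ p) = ∫ x, C x := by
    rw [setIntegral_congr_fun hSmeas (g := C) ?_,
      setIntegral_eq_integral_of_forall_compl_eq_zero ?_]
    · intro x hx
      have h0 : du x = 0 := (hvan x (fun h => hx (hsupp h))).2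
      have h0' : fderiv ℝ u x (0, 1) = 0 := h0
      simp [hCdef, h0, h0', habs0]
    · intro x hx
      dsimp only
      rcases eq_or_ne (fderiv ℝ u x (0, 1)) 0 with h0 | h0
      · have h0' : du x = 0 := h0
        simp [hCdef, h0, h0', habs0]
      · have hxs : x ∈ tsupport u := by
          by_contra hxx
          exact h0 ((hvan x hxx).2)
        have hx2 : ε ≤ x.2 := (hmem x hxs).1
        have hx2p : (0:ℝ) < x.2 := lt_of_lt_of_le hε0 hx2
        have hexp : α / p * p = α := by field_simp
        have h1 : |x.2 ^ (α / p) * fderiv ℝ u x (0, 1)|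
            = x.2 ^ (α / p) * |fderiv ℝ u x (0, 1)| := by
          rw [abs_mul, abs_of_pos (Real.rpow_pos_of_pos hx2p _)]
        rw [h1, Real.mul_rpow (Real.rpow_pos_of_pos hx2p _).le (abs_nonneg _),
          ← Real.rpow_mul hx2p.le, hexp]
        simp only [hCdef]
        rw [hm_eq x.2 hx2]
  -- key integration-by-parts identity
  have hεM : ε / 2 ≤ M + 1 := by linarith
  have hkey : (∫ x, F x) = 0 := by
    have hF2 : Integrable F ((volume : Measure (Fin n → ℝ)).prod (volume : Measure ℝ)) := by
      rwa [← MeasureTheory.Measure.volume_eq_prod]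
    rw [MeasureTheory.Measure.volume_eq_prod, MeasureTheory.integral_prod F hF2]
    have hinner : ∀ y : Fin n → ℝ, (∫ t : ℝ, F (y, t)) = 0 := by
      intro y
      have h0 : ∀ t : ℝ, t ∉ Set.Ioc (ε/2) (M+1) → F (y, t) = 0 := by
        intro t ht
        have hns : (y, t) ∉ tsupport u := by
          intro hmem'
          obtain ⟨h1, h2⟩ := hmem _ hmem'
          simp only [Set.mem_Ioc, not_and_or, not_lt, not_le] at ht
          dsimp only at h1 h2
          rcases ht with ht | ht
          · linarith
          · linarith
        obtain ⟨h1, h2⟩ := hvan _ hns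
        simp [hFdef, hAdef, hBdef, h1, h2, habs0]
      have hG : ∀ t ∈ Set.uIcc (ε/2) (M+1),
          HasDerivAt (fun s : ℝ => s ^ (α - p + 1) * |u (y, s)| ^ p) (F (y, t)) t := by
        intro t ht
        rw [Set.uIcc_of_le hεM] at ht
        have ht0 : 0 < t := lt_of_lt_of_le (by linarith) ht.1
        have hslice : HasDerivAt (fun s : ℝ => u (y, s)) (du (y, t)) t := by
          have hcomp := ((hu.differentiable (by simp) (y, t)).hasFDerivAt).comp_hasDerivAt t
            ((hasDerivAt_const t y).prodMk (hasDerivAt_id t))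
          exact hcomp
        have h1 : HasDerivAt (fun s : ℝ => s ^ (α - p + 1)) ((α - p + 1) * t ^ (α - p)) t := by
          have := Real.hasDerivAt_rpow_const (x := t) (p := α - p + 1) (Or.inl ht0.ne')
          simpa [show α - p + 1 - 1 = α - p by ring] using this
        have h2 : HasDerivAt (fun s : ℝ => |u (y, s)| ^ p)
            ((p * |u (y, t)| ^ (p - 2) * u (y, t)) * du (y, t)) t :=
          by have h := (hasDerivAt_abs_rpow (u (y, t)) hp).comp t hslice; exact h
        have hmul := h1.mul h2
        have hFt : F (y, t) = ((α - p + 1) * t ^ (α - p)) * |u (y, t)| ^ p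
            + t ^ (α - p + 1) * ((p * |u (y, t)| ^ (p - 2) * u (y, t)) * du (y, t)) := by
          rcases le_or_gt ε t with hεt | hεt
          · have hmt : m t = t := hm_eq t hεt
            simp only [hFdef, hAdef, hBdef]
            simp only [hmdef]
            simp only [show max t ε = t from hmt]
            ring
          · have hns : (y, t) ∉ tsupport u := by
              intro hmem'
              have h' := (hmem _ hmem').1
              dsimp only at h'
              linarith
            obtain ⟨h1', h2'⟩ := hvan _ hns
            simp [hFdef, hAdef, hBdef, h1', h2', habs0]
        rw [hFt]
        exact hmul
      have hcont : Continuous (fun t : ℝ => F (y, t)) :=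
        hF_cont.comp (continuous_const.prodMk continuous_id)
      have hFTC := intervalIntegral.integral_eq_sub_of_hasDerivAt hG
        (hcont.intervalIntegrable _ _)
      have he1 : u (y, ε/2) = 0 := by
        refine (hvan _ ?_).1
        intro hmem'
        have h' := (hmem _ hmem').1
        dsimp only at h'
        linarith
      have he2 : u (y, M+1) = 0 := by
        refine (hvan _ ?_).1
        intro hmem'
        have h' := (hmem _ hmem').2
        dsimp only at h'
        linarith
      calc (∫ t : ℝ, F (y, t))
          = ∫ t in Set.Ioc (ε/2) (M+1), F (y, t) :=
            (setIntegral_eq_integral_of_forall_compl_eq_zero h0).symm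
        _ = ∫ t in (ε/2)..(M+1), F (y, t) := (intervalIntegral.integral_of_le hεM).symm
        _ = 0 := by rw [hFTC]; simp [he1, he2, habs0]
    simp [hinner]
  -- consequences of the key identity
  have hI_nonneg : 0 ≤ ∫ x, A x := integral_nonneg hA_nonneg
  have hJ_nonneg : 0 ≤ ∫ x, C x := integral_nonneg hC_nonneg
  have hBint_eq : (∫ x, B x) = -((α - p + 1) * ∫ x, A x) := by
    have hthis := hkey
    simp only [hFdef] at hthis
    rw [integral_add (hA_int.const_mul _) hB_int, integral_const_mul _ _] at hthis
    linarith
  -- pointwise computations for Hölder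
  have habsB : ∀ x, |B x| = p * (f x * g x) := by
    intro x
    have hsplit : m x.2 ^ (α - p + 1) = m x.2 ^ ((α - p)/q) * m x.2 ^ (α/p) := by
      rw [← Real.rpow_add (hm_pos x.2)]
      congr 1
      rw [hqdef]
      field_simp
      ring
    have haux : |u x| ^ (p - 2) * |u x| = |u x| ^ (p - 1) := abs_rpow_mul_abs hp (u x)
    calc |B x| = m x.2 ^ (α - p + 1) * (p * (|u x| ^ (p - 2) * |u x|) * |du x|) := by
          simp only [hBdef]
          rw [abs_mul, abs_of_nonneg (Real.rpow_nonneg (hm_pos x.2).le _),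
            abs_mul, abs_mul, abs_mul, abs_of_pos hp0,
            abs_of_nonneg (Real.rpow_nonneg (abs_nonneg _) _)]
          ring
      _ = p * (f x * g x) := by
          rw [haux, hsplit]
          simp only [hfdef, hgdef]
          ring
  have hfq : ∀ x, f x ^ q = A x := by
    intro x
    simp only [hfdef, hAdef]
    rw [Real.mul_rpow (Real.rpow_nonneg (hm_pos x.2).le _) (Real.rpow_nonneg (abs_nonneg _) _),
      ← Real.rpow_mul (hm_pos x.2).le, ← Real.rpow_mul (abs_nonneg _),
      div_mul_cancel₀ _ hq0, show (p - 1) * q = p by rw [hqdef]; field_simp]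
  have hgp : ∀ x, g x ^ p = C x := by
    intro x
    simp only [hgdef, hCdef]
    rw [Real.mul_rpow (Real.rpow_nonneg (hm_pos x.2).le _) (abs_nonneg _),
      ← Real.rpow_mul (hm_pos x.2).le, div_mul_cancel₀ _ hp0']
  -- Hölder inequality
  have hHold : (∫ x, f x * g x) ≤ (∫ x, f x ^ q) ^ (1/q) * (∫ x, g x ^ p) ^ (1/p) :=
    MeasureTheory.integral_mul_le_Lp_mul_Lq_of_nonneg hqp
      (Filter.Eventually.of_forall hf_nonneg) (Filter.Eventually.of_forall hg_nonneg)
      (hf_cont.memLp_of_hasCompactSupport hf_hcs)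
      (hg_cont.memLp_of_hasCompactSupport hg_hcs)
  have hIabs : |α - p + 1| * (∫ x, A x)
      ≤ p * ((∫ x, A x) ^ (1/q) * (∫ x, C x) ^ (1/p)) := by
    have h1 : |∫ x, B x| = |α - p + 1| * ∫ x, A x := by
      rw [hBint_eq, abs_neg, abs_mul, abs_of_nonneg hI_nonneg]
    have h2 : |∫ x, B x| ≤ ∫ x, |B x| := by
      simpa [Real.norm_eq_abs] using norm_integral_le_integral_norm (f := B) (μ := volume)
    have h3 : (∫ x, |B x|) = p * ∫ x, f x * g x := by
      simp only [habsB]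
      rw [integral_const_mul _ _]
    have h4 : (∫ x, f x ^ q) = ∫ x, A x := by simp only [hfq]
    have h5 : (∫ x, g x ^ p) = ∫ x, C x := by simp only [hgp]
    rw [h4, h5] at hHold
    calc |α - p + 1| * ∫ x, A x = |∫ x, B x| := h1.symm
      _ ≤ ∫ x, |B x| := h2
      _ = p * ∫ x, f x * g x := h3
      _ ≤ p * ((∫ x, A x) ^ (1/q) * (∫ x, C x) ^ (1/p)) := by
          exact mul_le_mul_of_nonneg_left hHold hp0.le
  -- final arithmetic
  rw [hLHS, hRHS]
  rcases eq_or_lt_of_le hI_nonneg with hI0 | hIpos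
  · rw [← hI0, Real.zero_rpow (by positivity : (1:ℝ)/p ≠ 0)]
    exact mul_nonneg (div_nonneg hp0.le (abs_nonneg _)) (Real.rpow_nonneg hJ_nonneg _)
  · have hIq : 0 < (∫ x, A x) ^ (1/q) := Real.rpow_pos_of_pos hIpos _
    have hIsplit : (∫ x, A x) = (∫ x, A x) ^ (1/q) * (∫ x, A x) ^ (1/p) := by
      rw [← Real.rpow_add hIpos,
        show 1/q + 1/p = 1 by simpa [one_div, add_comm] using hqp.inv_add_inv_eq_one,
        Real.rpow_one]
    have hmain : |α - p + 1| * ((∫ x, A x) ^ (1/q) * (∫ x, A x) ^ (1/p))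
        ≤ p * ((∫ x, A x) ^ (1/q) * (∫ x, C x) ^ (1/p)) := by
      rw [← hIsplit]
      exact hIabs
    have hcancel : |α - p + 1| * (∫ x, A x) ^ (1/p) ≤ p * (∫ x, C x) ^ (1/p) := by
      have h' : (∫ x, A x) ^ (1/q) * (|α - p + 1| * (∫ x, A x) ^ (1/p))
          ≤ (∫ x, A x) ^ (1/q) * (p * (∫ x, C x) ^ (1/p)) := by
        calc (∫ x, A x) ^ (1/q) * (|α - p + 1| * (∫ x, A x) ^ (1/p))
            = |α - p + 1| * ((∫ x, A x) ^ (1/q) * (∫ x, A x) ^ (1/p)) := by ring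
          _ ≤ p * ((∫ x, A x) ^ (1/q) * (∫ x, C x) ^ (1/p)) := hmain
          _ = (∫ x, A x) ^ (1/q) * (p * (∫ x, C x) ^ (1/p)) := by ring
      exact le_of_mul_le_mul_left h' hIq
    rw [div_mul_eq_mul_div, le_div_iff₀ (abs_pos.mpr hβ1), mul_comm ((∫ x, A x) ^ (1/p))]
    exact hcancel
end

section
/- Let $U = \{(x', x_n) \in \mathbb{R}^n : |x'| < r, \ x_n > h(x')\}$ where $r > 0$ and $h : \{|x'| \leq r\} \to \mathbb{R}$ is Lipschitz. Let $1 < p < \infty$, $\alpha \neq p - 1$. Then for every smooth $u$ on $\overline{U}$ vanishing near the graph $\{x_n = h(x')\}$ and for large $x_n$, one has $\|(x_n - h(x'))^{(\alpha/p)-1} u\|_{L^p(U)} \leq \frac{p}{|\alpha-p+1|} \|(x_n - h(x'))^{\alpha/p} \partial_n u\|_{L^p(U)}$. -/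
open Real MeasureTheory Set intervalIntegral
open scoped ENNReal

lemma hardy_1d {p α h₀ a b : ℝ} (hp : 1 < p) (hc : α - p + 1 ≠ 0) (ha : h₀ < a)
    (hab : a < b) {f f' : ℝ → ℝ}
    (hf : ∀ t ∈ Set.Icc a b, HasDerivAt f (f' t) t)
    (hf' : ContinuousOn f' (Set.Icc a b)) (hfa : f a = 0) (hfb : f b = 0) :
    ∫ t in a..b, (t - h₀) ^ (α - p) * |f t| ^ p ≤
      (p / |α - p + 1|) ^ p * ∫ t in a..b, (t - h₀) ^ α * |f' t| ^ p := by
  have hp0 : (0:ℝ) < p := lt_trans zero_lt_one hp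
  have hq0 : (0:ℝ) < p - 1 := by linarith
  set q : ℝ := p / (p - 1) with hq_def
  have hq1 : 1 < q := by rw [hq_def, lt_div_iff₀ hq0]; linarith
  have hqpos : 0 < q := lt_trans zero_lt_one hq1
  have hpq : p.HolderConjugate q := Real.holderConjugate_iff.2 ⟨hp, by rw [hq_def, inv_div, inv_eq_one_div, ← add_div, add_sub_cancel, div_self hp0.ne']⟩
  have huIcc : Set.uIcc a b = Set.Icc a b := uIcc_of_le hab.le
  have hpos : ∀ t ∈ Set.Icc a b, (0:ℝ) < t - h₀ := fun t ht => by
    have := ht.1; linarith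
  -- continuity facts
  have hfc : ContinuousOn f (Set.Icc a b) := fun t ht => (hf t ht).continuousAt.continuousWithinAt
  have hwc : ∀ γ : ℝ, ContinuousOn (fun t => (t - h₀) ^ γ) (Set.Icc a b) := by
    intro γ
    exact (continuousOn_id.sub continuousOn_const).rpow_const
      (fun t ht => Or.inl (ne_of_gt (hpos t ht)))
  have habs : ∀ γ : ℝ, 0 < γ → ∀ {g : ℝ → ℝ}, ContinuousOn g (Set.Icc a b) →
      ContinuousOn (fun t => |g t| ^ γ) (Set.Icc a b) := by
    intro γ hγ g hg
    exact hg.abs.rpow_const (fun t ht => Or.inr hγ.le)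
  have hφ : Continuous (fun y : ℝ => p * |y| ^ (p - 2) * y) := by
    have h1 : Continuous (deriv (fun y : ℝ => ‖y‖ ^ p)) :=
      (contDiff_norm_rpow (E := ℝ) hp).continuous_deriv le_rfl
    have h2 : (deriv fun y : ℝ => ‖y‖ ^ p) = fun y => p * ‖y‖ ^ (p - 2) * y :=
      funext fun y => (hasDerivAt_norm_rpow y hp).deriv
    rw [h2] at h1
    simpa [Real.norm_eq_abs] using h1
  set A := ∫ t in a..b, (t - h₀) ^ (α - p) * |f t| ^ p with hA
  set B := ∫ t in a..b, (t - h₀) ^ α * |f' t| ^ p with hB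
  have hAint : IntervalIntegrable (fun t => (t - h₀) ^ (α - p) * |f t| ^ p) volume a b := by
    apply ContinuousOn.intervalIntegrable
    rw [huIcc]; exact ((hwc _).mul (habs p hp0 hfc))
  have hBint : IntervalIntegrable (fun t => (t - h₀) ^ α * |f' t| ^ p) volume a b := by
    apply ContinuousOn.intervalIntegrable
    rw [huIcc]; exact ((hwc _).mul (habs p hp0 hf'))
  have hA0 : 0 ≤ A := by
    apply intervalIntegral.integral_nonneg hab.le
    intro t ht; have := hpos t ht; positivity
  have hB0 : 0 ≤ B := by
    apply intervalIntegral.integral_nonneg hab.le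
    intro t ht; have := hpos t ht; positivity
  set c : ℝ := α - p + 1 with hc_def
  have hc1 : c - 1 = α - p := by rw [hc_def]; ring
  -- integrability of the two IBP pieces
  have hXint : IntervalIntegrable (fun t => (c * (t - h₀) ^ (c - 1)) * |f t| ^ p) volume a b := by
    apply ContinuousOn.intervalIntegrable
    rw [huIcc]; exact (continuousOn_const.mul (hwc _)).mul (habs p hp0 hfc)
  have hYint : IntervalIntegrable
      (fun t => ((t - h₀) ^ c) * (p * |f t| ^ (p - 2) * f t * f' t)) volume a b := by
    apply ContinuousOn.intervalIntegrable
    rw [huIcc]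
    exact (hwc c).mul (((hφ.comp_continuousOn hfc)).mul hf')
  -- integration by parts
  have hIBP : (∫ t in a..b, (c * (t - h₀) ^ (c - 1)) * |f t| ^ p)
      + ∫ t in a..b, ((t - h₀) ^ c) * (p * |f t| ^ (p - 2) * f t * f' t) = 0 := by
    rw [← intervalIntegral.integral_add hXint hYint]
    have := intervalIntegral.integral_deriv_mul_eq_sub
      (u := fun t => (t - h₀) ^ c) (v := fun t => |f t| ^ p)
      (u' := fun t => c * (t - h₀) ^ (c - 1))
      (v' := fun t => p * |f t| ^ (p - 2) * f t * f' t)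
      (a := a) (b := b)
      (fun t ht => by
        have h1 : HasDerivAt (fun t : ℝ => t - h₀) 1 t := (hasDerivAt_id t).sub_const h₀
        have h2 := (Real.hasDerivAt_rpow_const (x := t - h₀) (p := c)
          (Or.inl (ne_of_gt (hpos t (huIcc ▸ ht))))).comp t h1
        simpa [Function.comp_def] using h2)
      (fun t ht => by
        have h2 := (hasDerivAt_abs_rpow (f t) hp).comp t (hf t (huIcc ▸ ht))
        simpa [Function.comp_def, mul_assoc, mul_comm, mul_left_comm] using h2)
      (by
        apply ContinuousOn.intervalIntegrable
        rw [huIcc]; exact continuousOn_const.mul (hwc _))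
      (by
        apply ContinuousOn.intervalIntegrable
        rw [huIcc]
        exact (hφ.comp_continuousOn hfc).mul hf')
    rw [this]
    simp [hfa, hfb, Real.zero_rpow (ne_of_gt hp0)]
  have hX : (∫ t in a..b, (c * (t - h₀) ^ (c - 1)) * |f t| ^ p) = c * A := by
    rw [hA, ← intervalIntegral.integral_const_mul]
    apply intervalIntegral.integral_congr
    intro t ht
    rw [hc1]; ring
  have hkey : c * A = - ∫ t in a..b, ((t - h₀) ^ c) * (p * |f t| ^ (p - 2) * f t * f' t) := by
    rw [← hX]; linarith [hIBP]
  -- Hölder set-up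
  set g1 : ℝ → ℝ := fun t => (t - h₀) ^ ((α - p)/q) * |f t| ^ (p - 1) with hg1
  set g2 : ℝ → ℝ := fun t => (t - h₀) ^ (α/p) * |f' t| with hg2
  have hg1c : ContinuousOn g1 (Set.Icc a b) := (hwc _).mul (habs (p-1) hq0 hfc)
  have hg2c : ContinuousOn g2 (Set.Icc a b) := (hwc _).mul hf'.abs
  have he : (α - p)/q + α/p = c := by
    rw [hq_def, hc_def]; field_simp; ring
  have hqne : q ≠ 0 := ne_of_gt hqpos
  -- pointwise bound
  have hpw : ∀ t ∈ Set.Icc a b,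
      |((t - h₀) ^ c) * (p * |f t| ^ (p - 2) * f t * f' t)| ≤ p * (g1 t * g2 t) := by
    intro t ht
    have hw0 : (0:ℝ) < t - h₀ := hpos t ht
    rcases eq_or_ne (f t) 0 with hft | hft
    · rw [hft]
      simp only [mul_zero, zero_mul, abs_zero]
      have : |f t| ^ (p - 1) = 0 := by
        rw [hft, abs_zero, Real.zero_rpow (by linarith : p - (1:ℝ) ≠ 0)]
      rw [hg1]
      simp only [this, mul_zero, zero_mul]
      positivity
    · have habsf : (0:ℝ) < |f t| := abs_pos.2 hft
      have h1 : |((t - h₀) ^ c) * (p * |f t| ^ (p - 2) * f t * f' t)|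
          = (t - h₀) ^ c * (p * (|f t| ^ (p - 2) * |f t|) * |f' t|) := by
        rw [abs_mul, abs_mul, abs_mul, abs_mul,
          abs_of_nonneg (Real.rpow_nonneg hw0.le c),
          abs_of_nonneg hp0.le,
          abs_of_nonneg (Real.rpow_nonneg (abs_nonneg (f t)) (p - 2))]
        ring
      rw [h1]
      have h2 : |f t| ^ (p - 2) * |f t| = |f t| ^ (p - 1) := by
        rw [show p - 1 = p - 2 + 1 by ring, Real.rpow_add habsf, Real.rpow_one]
      have h3 : (t - h₀) ^ c = (t - h₀) ^ ((α - p)/q) * (t - h₀) ^ (α/p) := by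
        rw [← Real.rpow_add hw0, he]
      rw [h2, h3, hg1, hg2]
      apply le_of_eq
      ring
  -- |c| * A ≤ p * ∫ g1 g2
  have hg12int : IntervalIntegrable (fun t => g1 t * g2 t) volume a b := by
    apply ContinuousOn.intervalIntegrable
    rw [huIcc]; exact hg1c.mul hg2c
  have hbound : |c| * A ≤ p * ∫ t in a..b, g1 t * g2 t := by
    have e1 : |c| * A = |c * A| := by
      rw [abs_mul, abs_of_nonneg hA0]
    rw [e1, hkey, abs_neg]
    calc |∫ t in a..b, ((t - h₀) ^ c) * (p * |f t| ^ (p - 2) * f t * f' t)|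
        ≤ ∫ t in a..b, |((t - h₀) ^ c) * (p * |f t| ^ (p - 2) * f t * f' t)| :=
          intervalIntegral.abs_integral_le_integral_abs hab.le
      _ ≤ ∫ t in a..b, p * (g1 t * g2 t) := by
          apply intervalIntegral.integral_mono_on hab.le hYint.abs
            (hg12int.const_mul p) hpw
      _ = p * ∫ t in a..b, g1 t * g2 t := intervalIntegral.integral_const_mul _ _
  -- Hölder
  haveI hfin : IsFiniteMeasure (volume.restrict (Set.Ioc a b)) :=
    ⟨by rw [Measure.restrict_apply_univ]; exact measure_Ioc_lt_top⟩
  have hmem : ∀ (s : ℝ) {g : ℝ → ℝ}, ContinuousOn g (Set.Icc a b) →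
      MemLp g (ENNReal.ofReal s) (volume.restrict (Set.Ioc a b)) := by
    intro s g hg
    obtain ⟨C, hC⟩ := (isCompact_Icc (a := a) (b := b)).exists_bound_of_continuousOn hg
    exact MemLp.of_bound ((hg.mono Set.Ioc_subset_Icc_self).aestronglyMeasurable
      measurableSet_Ioc) C
      ((ae_restrict_mem measurableSet_Ioc).mono fun t ht => hC t (Set.Ioc_subset_Icc_self ht))
  have hAeq : ∫ t in Set.Ioc a b, g1 t ^ q = A := by
    rw [hA, intervalIntegral.integral_of_le hab.le]
    apply setIntegral_congr_fun measurableSet_Ioc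
    intro t ht
    have hw0 : (0:ℝ) < t - h₀ := hpos t (Set.Ioc_subset_Icc_self ht)
    have hexp : (p - 1) * q = p := by rw [hq_def]; field_simp
    rw [hg1]
    simp only
    rw [Real.mul_rpow (Real.rpow_nonneg hw0.le _) (Real.rpow_nonneg (abs_nonneg _) _),
      ← Real.rpow_mul hw0.le, ← Real.rpow_mul (abs_nonneg _),
      div_mul_cancel₀ _ hqne, hexp]
  have hBeq : ∫ t in Set.Ioc a b, g2 t ^ p = B := by
    rw [hB, intervalIntegral.integral_of_le hab.le]
    apply setIntegral_congr_fun measurableSet_Ioc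
    intro t ht
    have hw0 : (0:ℝ) < t - h₀ := hpos t (Set.Ioc_subset_Icc_self ht)
    have hexp : α / p * p = α := by field_simp
    rw [hg2]
    simp only
    rw [Real.mul_rpow (Real.rpow_nonneg hw0.le _) (abs_nonneg _),
      ← Real.rpow_mul hw0.le, hexp]
  have hH : ∫ t in a..b, g1 t * g2 t ≤ A ^ (1/q) * B ^ (1/p) := by
    rw [intervalIntegral.integral_of_le hab.le, ← hAeq, ← hBeq]
    apply MeasureTheory.integral_mul_le_Lp_mul_Lq_of_nonneg hpq.symm
    · exact (ae_restrict_mem measurableSet_Ioc).mono fun t ht => by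
        have := hpos t (Set.Ioc_subset_Icc_self ht)
        simp only [hg1]; positivity
    · exact (ae_restrict_mem measurableSet_Ioc).mono fun t ht => by
        have := hpos t (Set.Ioc_subset_Icc_self ht)
        simp only [hg2]; positivity
    · exact hmem q hg1c
    · exact hmem p hg2c
  -- conclusion
  rcases hA0.eq_or_lt with hA0' | hA0'
  · rw [← hA0']
    have : (0:ℝ) ≤ (p / |c|) ^ p := Real.rpow_nonneg (by positivity) p
    nlinarith [Real.rpow_nonneg (div_nonneg hp0.le (abs_nonneg c)) p]
  · have hsum : 1/q + 1/p = 1 := by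
      rw [one_div, one_div]; exact hpq.symm.inv_add_inv_eq_one
    have hAsplit : A = A ^ (1/q) * A ^ (1/p) := by
      rw [← Real.rpow_add hA0', hsum, Real.rpow_one]
    have hstep : |c| * A ≤ p * (A ^ (1/q) * B ^ (1/p)) := by
      calc |c| * A ≤ p * ∫ t in a..b, g1 t * g2 t := hbound
        _ ≤ p * (A ^ (1/q) * B ^ (1/p)) := by
            apply mul_le_mul_of_nonneg_left hH hp0.le
    have hApos : (0:ℝ) < A ^ (1/q) := Real.rpow_pos_of_pos hA0' _
    have h5 : |c| * A ^ (1/p) ≤ p * B ^ (1/p) := by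
      have h5' : A ^ (1/q) * (|c| * A ^ (1/p)) ≤ A ^ (1/q) * (p * B ^ (1/p)) := by
        calc A ^ (1/q) * (|c| * A ^ (1/p)) = |c| * (A ^ (1/q) * A ^ (1/p)) := by ring
          _ = |c| * A := by rw [← hAsplit]
          _ ≤ p * (A ^ (1/q) * B ^ (1/p)) := hstep
          _ = A ^ (1/q) * (p * B ^ (1/p)) := by ring
      exact le_of_mul_le_mul_left h5' hApos
    have hcpos : (0:ℝ) < |c| := abs_pos.2 hc
    have h6 : A ^ (1/p) ≤ (p / |c|) * B ^ (1/p) := by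
      rw [div_mul_eq_mul_div, le_div_iff₀ hcpos, mul_comm (A ^ (1/p))]
      exact h5
    calc A = (A ^ (1/p)) ^ p := by
          rw [← Real.rpow_mul hA0, one_div, inv_mul_cancel₀ (ne_of_gt hp0), Real.rpow_one]
      _ ≤ ((p / |c|) * B ^ (1/p)) ^ p := by
          apply Real.rpow_le_rpow (Real.rpow_nonneg hA0 _) h6 hp0.le
      _ = (p / |c|) ^ p * B := by
          rw [Real.mul_rpow (by positivity) (Real.rpow_nonneg hB0 _),
            ← Real.rpow_mul hB0, one_div, inv_mul_cancel₀ (ne_of_gt hp0), Real.rpow_one]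

set_option maxHeartbeats 2000000 in
/-- Weighted Hardy inequality over a Lipschitz hypograph region. -/
theorem hardy_lipschitz_graph (n : ℕ) (p α r : ℝ) (K : NNReal) (hp : 1 < p)
    (hα : α ≠ p - 1) (hr : 0 < r) (h : (Fin n → ℝ) → ℝ)
    (hh : LipschitzOnWith K h (Metric.closedBall 0 r))
    (U : Set ((Fin n → ℝ) × ℝ)) (hU : U = {x | ‖x.1‖ < r ∧ h x.1 < x.2})
    (u : ((Fin n → ℝ) × ℝ) → ℝ) (hu : ContDiffOn ℝ (⊤ : ℕ∞) u (closure U))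
    (hvan : ∃ ε > 0, ∀ x ∈ U, x.2 - h x.1 < ε → u x = 0)
    (hfar : ∃ M : ℝ, ∀ x ∈ U, M < x.2 → u x = 0) :
    (∫ x in U, |(x.2 - h x.1) ^ (α / p - 1) * u x| ^ p) ^ (1 / p) ≤
      (p / |α - p + 1|) *
        (∫ x in U, |(x.2 - h x.1) ^ (α / p) * fderiv ℝ u x (0, 1)| ^ p) ^ (1 / p) := by
  obtain ⟨ε, hε, hvan⟩ := hvan
  obtain ⟨M, hM⟩ := hfar
  have hp0 : (0:ℝ) < p := lt_trans zero_lt_one hp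
  have hpne : p ≠ 0 := ne_of_gt hp0
  have hc : α - p + 1 ≠ 0 := fun hh0 => hα (by linarith)
  have hC0 : (0:ℝ) ≤ p / |α - p + 1| := div_nonneg hp0.le (abs_nonneg _)
  -- openness of U
  have hUsub : U ⊆ (Metric.ball (0 : Fin n → ℝ) r) ×ˢ (Set.univ : Set ℝ) := by
    rw [hU]; intro x hx; exact ⟨mem_ball_zero_iff.2 hx.1, mem_univ _⟩
  have hhc : ContinuousOn (fun x : (Fin n → ℝ) × ℝ => h x.1)
      ((Metric.ball (0 : Fin n → ℝ) r) ×ˢ (Set.univ : Set ℝ)) := by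
    apply (hh.continuousOn.mono Metric.ball_subset_closedBall).comp
      continuous_fst.continuousOn
    intro x hx
    exact hx.1
  have hgc : ContinuousOn (fun x : (Fin n → ℝ) × ℝ => x.2 - h x.1)
      ((Metric.ball (0 : Fin n → ℝ) r) ×ˢ (Set.univ : Set ℝ)) :=
    continuous_snd.continuousOn.sub hhc
  have hUP : U = ((Metric.ball (0 : Fin n → ℝ) r) ×ˢ (Set.univ : Set ℝ)) ∩
      ((fun x : (Fin n → ℝ) × ℝ => x.2 - h x.1) ⁻¹' (Set.Ioi 0)) := by
    rw [hU]; ext x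
    simp [Set.mem_prod, mem_ball_zero_iff, sub_pos]
  have hUopen : IsOpen U := by
    rw [hUP]
    exact hgc.isOpen_inter_preimage (Metric.isOpen_ball.prod isOpen_univ) isOpen_Ioi
  have hUmeas : MeasurableSet U := hUopen.measurableSet
  have hgU : ContinuousOn (fun x : (Fin n → ℝ) × ℝ => x.2 - h x.1) U := hgc.mono hUsub
  have hgpos : ∀ x ∈ U, (0:ℝ) < x.2 - h x.1 := by
    rw [hU]; intro x hx; exact sub_pos.2 hx.2
  have hUmem : ∀ x : (Fin n → ℝ) × ℝ, x ∈ U ↔ ‖x.1‖ < r ∧ h x.1 < x.2 := by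
    rw [hU]; intro x; exact Iff.rfl
  -- u facts
  have huc : ContinuousOn u U := hu.continuousOn.mono subset_closure
  have hclnhds : ∀ x ∈ U, closure U ∈ nhds x := fun x hx =>
    mem_nhds_iff.2 ⟨U, subset_closure, hUopen, hx⟩
  have hudiff : ∀ x ∈ U, HasFDerivAt u (fderiv ℝ u x) x := by
    intro x hx
    exact (((hu x (subset_closure hx)).differentiableWithinAt (by simp)).differentiableAt
      (hclnhds x hx)).hasFDerivAt
  -- vanishing of fderiv on open zero sets
  have hzero : ∀ (V : Set ((Fin n → ℝ) × ℝ)), IsOpen V → (∀ y ∈ V, u y = 0) →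
      ∀ x ∈ V, fderiv ℝ u x = 0 := by
    intro V hVo hV0 x hx
    have he : u =ᶠ[nhds x] (fun _ => (0:ℝ)) :=
      Filter.eventuallyEq_of_mem (hVo.mem_nhds hx) hV0
    rw [he.fderiv_eq]
    exact fderiv_const_apply 0
  have hV1o : IsOpen (U ∩ (fun x : (Fin n → ℝ) × ℝ => x.2 - h x.1) ⁻¹' (Set.Iio ε)) :=
    hgU.isOpen_inter_preimage hUopen isOpen_Iio
  have hder1 : ∀ x ∈ U, x.2 - h x.1 < ε → fderiv ℝ u x = 0 := by
    intro x hx hlt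
    exact hzero _ hV1o (fun y hy => hvan y hy.1 hy.2) x ⟨hx, hlt⟩
  have hV2o : IsOpen (U ∩ Prod.snd ⁻¹' (Set.Ioi M)) :=
    hUopen.inter (isOpen_Ioi.preimage continuous_snd)
  have hder2 : ∀ x ∈ U, M < x.2 → fderiv ℝ u x = 0 := by
    intro x hx hlt
    exact hzero _ hV2o (fun y hy => hM y hy.1 hy.2) x ⟨hx, hlt⟩
  -- bounds on h
  have hrange : ∀ x' : Fin n → ℝ, ‖x'‖ ≤ r → |h x' - h 0| ≤ K * r := by
    intro x' hx'
    have h1 := hh (mem_closedBall_zero_iff.2 hx') (Metric.mem_closedBall_self hr.le)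
    rw [edist_dist, edist_dist] at h1
    have h2 : dist (h x') (h 0) ≤ K * dist x' 0 := by
      have := ENNReal.toReal_mono (by simp [ENNReal.mul_ne_top]) h1
      rw [ENNReal.toReal_ofReal dist_nonneg] at this
      rw [ENNReal.toReal_mul, ENNReal.toReal_ofReal dist_nonneg] at this
      simpa using this
    rw [Real.dist_eq] at h2
    calc |h x' - h 0| ≤ K * dist x' 0 := h2
      _ ≤ K * r := by
          apply mul_le_mul_of_nonneg_left _ K.2
          rwa [dist_zero_right]
  set m₀ : ℝ := h 0 - K * r - 1 with hm₀
  have hlow : ∀ x' : Fin n → ℝ, ‖x'‖ ≤ r → m₀ < h x' := by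
    intro x' hx'
    have := abs_le.1 (hrange x' hx')
    rw [hm₀]; linarith [this.1]
  -- compact set and derivative bound
  set K₀ : Set ((Fin n → ℝ) × ℝ) := (Metric.closedBall (0 : Fin n → ℝ) r) ×ˢ (Set.Icc m₀ M)
    with hK₀
  have hK₀c : IsCompact K₀ := (isCompact_closedBall _ _).prod isCompact_Icc
  have hK₀meas : MeasurableSet K₀ :=
    ((Metric.isClosed_closedBall).prod isClosed_Icc).measurableSet
  have hT : IsCompact (K₀ ∩ closure U) := hK₀c.inter_right isClosed_closure
  have hDbound : ∃ D : ℝ, 0 ≤ D ∧ ∀ x ∈ U ∩ K₀, ‖fderiv ℝ u x‖ ≤ D := by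
    set T := K₀ ∩ closure U with hTdef
    have hloc : ∀ y ∈ T, ∃ N : Set ((Fin n → ℝ) × ℝ), IsOpen N ∧ y ∈ N ∧
        ∃ C : ℝ, 0 ≤ C ∧ ∀ x ∈ U ∩ N, ‖fderiv ℝ u x‖ ≤ C := by
      intro y hy
      have hyU : y ∈ closure U := hy.2
      have h1 : ContDiffWithinAt ℝ 1 u (closure U) y := (hu y hyU).of_le (by simp)
      obtain ⟨V, hV, φ, hφ, -⟩ := (contDiffWithinAt_iff_of_ne_infty (by simp)).1 h1
      obtain ⟨W, hWo, hyW, hWV⟩ := mem_nhdsWithin.1 hV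
      have hyV : y ∈ V := hWV ⟨hyW, mem_insert y _⟩
      have hcont : ContinuousWithinAt (fun x => ‖φ x 1‖) V y :=
        ((hφ.cont 1 le_rfl) y hyV).norm
      have hev : ∀ᶠ x in nhdsWithin y V, ‖φ x 1‖ < ‖φ y 1‖ + 1 :=
        hcont.eventually_lt_const (by linarith [norm_nonneg (φ y 1)])
      obtain ⟨W₂, hW₂o, hyW₂, hsub₂⟩ := mem_nhdsWithin.1 hev
      refine ⟨W ∩ W₂, hWo.inter hW₂o, ⟨hyW, hyW₂⟩, ‖φ y 1‖ + 1,
        by positivity, ?_⟩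
      rintro x ⟨hxU, hxW, hxW₂⟩
      have hxV : x ∈ V := hWV ⟨hxW, mem_insert_of_mem _ (subset_closure hxU)⟩
      have hfd : HasFDerivWithinAt u
          ((continuousMultilinearCurryFin1 ℝ ((Fin n → ℝ) × ℝ) ℝ) (φ x 1)) V x :=
        hφ.hasFDerivWithinAt (by simp) hxV
      have hVnhds : V ∈ nhds x := by
        apply mem_nhds_iff.2 ⟨W ∩ U, ?_, hWo.inter hUopen, ⟨hxW, hxU⟩⟩
        intro z hz
        exact hWV ⟨hz.1, mem_insert_of_mem _ (subset_closure hz.2)⟩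
      rw [(hfd.hasFDerivAt hVnhds).fderiv]
      calc ‖(continuousMultilinearCurryFin1 ℝ ((Fin n → ℝ) × ℝ) ℝ) (φ x 1)‖
          = ‖φ x 1‖ := LinearIsometryEquiv.norm_map _ _
        _ ≤ ‖φ y 1‖ + 1 := le_of_lt (hsub₂ ⟨hxW₂, hxV⟩)
    choose N hNo hyN C hC0' hC using hloc
    have hcover : T ⊆ ⋃ i : T, N i i.2 := by
      intro x hx
      exact mem_iUnion.2 ⟨⟨x, hx⟩, hyN x hx⟩
    obtain ⟨t, ht⟩ := hT.elim_finite_subcover (fun i : T => N i i.2)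
      (fun i => hNo i i.2) hcover
    refine ⟨∑ i ∈ t, C i i.2, Finset.sum_nonneg fun i _ => hC0' i i.2, ?_⟩
    intro x hx
    have hxT : x ∈ T := ⟨hx.2, subset_closure hx.1⟩
    obtain ⟨i, hit, hxN⟩ := mem_iUnion₂.1 (ht hxT)
    calc ‖fderiv ℝ u x‖ ≤ C i i.2 := hC i i.2 x ⟨hx.1, hxN⟩
      _ ≤ ∑ j ∈ t, C j j.2 :=
        Finset.single_le_sum (f := fun i : T => C i i.2) (fun j _ => hC0' j j.2) hit
  obtain ⟨D, hD0, hD⟩ := hDbound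
  -- integrands
  set Du : ((Fin n → ℝ) × ℝ) → ℝ := fun x => fderiv ℝ u x (0, 1) with hDu
  set F : ((Fin n → ℝ) × ℝ) → ℝ := fun x => |(x.2 - h x.1) ^ (α / p - 1) * u x| ^ p with hF
  set G : ((Fin n → ℝ) × ℝ) → ℝ := fun x => |(x.2 - h x.1) ^ (α / p) * Du x| ^ p with hG
  show (∫ x in U, F x) ^ (1 / p) ≤ (p / |α - p + 1|) * (∫ x in U, G x) ^ (1 / p)
  have hDu_meas : Measurable Du :=
    measurable_fderiv_apply_const (𝕜 := ℝ) (f := u) ((0 : Fin n → ℝ), (1 : ℝ))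
  have hwcont : ∀ γ : ℝ, ContinuousOn (fun x : (Fin n → ℝ) × ℝ => (x.2 - h x.1) ^ γ) U :=
    fun γ => hgU.rpow_const fun x hx => Or.inl (ne_of_gt (hgpos x hx))
  have habs_rpow : Measurable fun y : ℝ => |y| ^ p :=
    measurable_abs.pow_const p
  have hFc : ContinuousOn F U := by
    rw [hF]
    exact (((hwcont (α/p - 1)).mul huc).abs).rpow_const fun x hx => Or.inr hp0.le
  have hFm : AEStronglyMeasurable F (volume.restrict U) := hFc.aestronglyMeasurable hUmeas
  have hGm : AEStronglyMeasurable G (volume.restrict U) := by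
    have h1 : AEMeasurable (fun x : (Fin n → ℝ) × ℝ => (x.2 - h x.1) ^ (α/p))
        (volume.restrict U) := (hwcont (α/p)).aemeasurable hUmeas
    have h2 : AEMeasurable G (volume.restrict U) := by
      rw [hG]
      exact habs_rpow.comp_aemeasurable (h1.mul hDu_meas.aemeasurable)
    exact h2.aestronglyMeasurable
  have hFnn : 0 ≤ᵐ[volume.restrict U] F := Filter.Eventually.of_forall fun x => by
    simp only [hF]; positivity
  have hGnn : 0 ≤ᵐ[volume.restrict U] G := Filter.Eventually.of_forall fun x => by
    simp only [hG]; positivity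
  have hFint : ∫ x in U, F x = (∫⁻ x in U, ENNReal.ofReal (F x)).toReal :=
    integral_eq_lintegral_of_nonneg_ae hFnn hFm
  have hGint : ∫ x in U, G x = (∫⁻ x in U, ENNReal.ofReal (G x)).toReal :=
    integral_eq_lintegral_of_nonneg_ae hGnn hGm
  -- the slice inequality
  have hslice : ∀ x' : Fin n → ℝ, ‖x'‖ < r →
      ∫⁻ t in Set.Ioi (h x'), ENNReal.ofReal (F (x', t)) ≤
        ENNReal.ofReal ((p / |α - p + 1|) ^ p) *
          ∫⁻ t in Set.Ioi (h x'), ENNReal.ofReal (G (x', t)) := by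
    intro x' hx'
    set h₀ := h x' with hh₀
    set a := h₀ + ε/2 with hadef
    set b := max (M+1) (a+1) with hbdef
    have hh₀a : h₀ < a := by rw [hadef]; linarith
    have hab : a < b := lt_of_lt_of_le (lt_add_one a) (le_max_right _ _)
    have hMb : M + 1 ≤ b := le_max_left _ _
    have hmemU : ∀ t : ℝ, h₀ < t → ((x', t) : (Fin n → ℝ) × ℝ) ∈ U :=
      fun t ht => (hUmem _).2 ⟨hx', ht⟩
    have haU : ∀ t ∈ Set.Icc a b, ((x', t) : (Fin n → ℝ) × ℝ) ∈ U :=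
      fun t ht => hmemU t (lt_of_lt_of_le hh₀a ht.1)
    set f : ℝ → ℝ := fun t => u (x', t) with hfdef
    set f' : ℝ → ℝ := fun t => Du (x', t) with hf'def
    have hfd : ∀ t ∈ Set.Icc a b, HasDerivAt f (f' t) t := by
      intro t ht
      have h1 := hudiff _ (haU t ht)
      have h2 : HasDerivAt (fun s : ℝ => ((x' : Fin n → ℝ), s)) ((0 : Fin n → ℝ), (1:ℝ)) t :=
        (hasDerivAt_const t x').prodMk (hasDerivAt_id t)
      exact h1.comp_hasDerivAt t h2
    have hfs : ContDiffOn ℝ (⊤ : ℕ∞) f (Set.Icc a b) := by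
      apply hu.comp ((contDiff_const.prodMk contDiff_id).contDiffOn)
      intro t ht
      exact subset_closure (haU t ht)
    have hud : UniqueDiffOn ℝ (Set.Icc a b) := uniqueDiffOn_Icc hab
    have hdc : ContinuousOn (derivWithin f (Set.Icc a b)) (Set.Icc a b) :=
      hfs.continuousOn_derivWithin hud (by simp)
    have hf'c : ContinuousOn f' (Set.Icc a b) := by
      apply hdc.congr
      intro t ht
      exact ((hfd t ht).hasDerivWithinAt.derivWithin (hud t ht)).symm
    have hfa : f a = 0 := by
      apply hvan _ (haU a ⟨le_rfl, hab.le⟩)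
      show a - h₀ < ε
      rw [hadef]; linarith
    have hfb : f b = 0 := by
      apply hM _ (haU b ⟨hab.le, le_rfl⟩)
      show M < b
      linarith
    have h1d := hardy_1d hp hc hh₀a hab hfd hf'c hfa hfb
    have hkeyF : ∀ t : ℝ, h₀ < t → F (x', t) = (t - h₀) ^ (α - p) * |f t| ^ p := by
      intro t ht
      have hw : (0:ℝ) < t - h₀ := sub_pos.2 ht
      have hexp : (α / p - 1) * p = α - p := by
        rw [sub_mul, div_mul_cancel₀ _ hpne, one_mul]
      simp only [hF, hfdef, hh₀]
      rw [abs_mul, abs_of_nonneg (Real.rpow_nonneg hw.le _),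
        Real.mul_rpow (Real.rpow_nonneg hw.le _) (abs_nonneg _),
        ← Real.rpow_mul hw.le, hexp]
    have hkeyG : ∀ t : ℝ, h₀ < t → G (x', t) = (t - h₀) ^ α * |f' t| ^ p := by
      intro t ht
      have hw : (0:ℝ) < t - h₀ := sub_pos.2 ht
      have hexp : α / p * p = α := div_mul_cancel₀ _ hpne
      simp only [hG, hf'def, hh₀]
      rw [abs_mul, abs_of_nonneg (Real.rpow_nonneg hw.le _),
        Real.mul_rpow (Real.rpow_nonneg hw.le _) (abs_nonneg _),
        ← Real.rpow_mul hw.le, hexp]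
    have hsplit : ∀ J : ℝ → ℝ, (∀ t, h₀ < t → t ≤ a → J t = 0) → (∀ t, b < t → J t = 0) →
        ∫⁻ t in Set.Ioi h₀, ENNReal.ofReal (J t) =
          ∫⁻ t in Set.Ioc a b, ENNReal.ofReal (J t) := by
      intro J hJ1 hJ2
      rw [← lintegral_indicator measurableSet_Ioi, ← lintegral_indicator measurableSet_Ioc]
      congr 1
      funext t
      by_cases h1 : t ∈ Set.Ioc a b
      · rw [Set.indicator_of_mem h1, Set.indicator_of_mem (Set.mem_Ioi.2 (lt_trans hh₀a h1.1))]
      · rw [Set.indicator_of_notMem h1]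
        by_cases h2 : t ∈ Set.Ioi h₀
        · rw [Set.indicator_of_mem h2]
          rcases lt_or_ge a t with hta | hta
          · have hbt : b < t := by
              by_contra hbt
              push_neg at hbt
              exact h1 ⟨hta, hbt⟩
            rw [hJ2 t hbt]; simp
          · rw [hJ1 t h2 hta]; simp
        · rw [Set.indicator_of_notMem h2]
    have hwcont1 : ∀ γ : ℝ, ContinuousOn (fun t : ℝ => (t - h₀) ^ γ) (Set.Icc a b) :=
      fun γ => (continuousOn_id.sub continuousOn_const).rpow_const
        (fun t ht => Or.inl (ne_of_gt (sub_pos.2 (lt_of_lt_of_le hh₀a ht.1))))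
    have hfc' : ContinuousOn f (Set.Icc a b) :=
      fun t ht => (hfd t ht).continuousAt.continuousWithinAt
    have hIFc : ContinuousOn (fun t => (t - h₀) ^ (α - p) * |f t| ^ p) (Set.Icc a b) :=
      (hwcont1 _).mul ((hfc'.abs).rpow_const fun t ht => Or.inr hp0.le)
    have hIGc : ContinuousOn (fun t => (t - h₀) ^ α * |f' t| ^ p) (Set.Icc a b) :=
      (hwcont1 _).mul ((hf'c.abs).rpow_const fun t ht => Or.inr hp0.le)
    have hIoc : ∀ J : ℝ → ℝ, ContinuousOn J (Set.Icc a b) → (∀ t ∈ Set.Ioc a b, 0 ≤ J t) →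
        ∫⁻ t in Set.Ioc a b, ENNReal.ofReal (J t) = ENNReal.ofReal (∫ t in a..b, J t) := by
      intro J hJc hJnn
      rw [intervalIntegral.integral_of_le hab.le]
      refine (ofReal_integral_eq_lintegral_ofReal ?_ ?_).symm
      · exact (hJc.integrableOn_Icc).mono_set Set.Ioc_subset_Icc_self
      · exact (ae_restrict_mem measurableSet_Ioc).mono hJnn
    have hFeq : ∫⁻ t in Set.Ioi h₀, ENNReal.ofReal (F (x', t)) =
        ENNReal.ofReal (∫ t in a..b, (t - h₀) ^ (α - p) * |f t| ^ p) := by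
      rw [hsplit (fun t => F (x', t)) ?van1 ?van2]
      case van1 =>
        intro t ht hta
        have hu0 : u (x', t) = 0 := hvan _ (hmemU t ht) (by show t - h₀ < ε; rw [hadef] at hta; linarith)
        simp only [hF]
        rw [hu0, mul_zero, abs_zero, Real.zero_rpow hpne]
      case van2 =>
        intro t htb
        have hu0 : u (x', t) = 0 := hM _ (hmemU t (lt_trans (lt_of_lt_of_le hh₀a hab.le) htb)) (by show M < t; linarith)
        simp only [hF]
        rw [hu0, mul_zero, abs_zero, Real.zero_rpow hpne]
      rw [← hIoc _ hIFc (fun t ht => by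
        have := sub_pos.2 (lt_trans hh₀a ht.1)
        positivity)]
      exact setLIntegral_congr_fun measurableSet_Ioc
        (fun t ht => by beta_reduce; rw [hkeyF t (lt_trans hh₀a ht.1)])
    have hGeq : ∫⁻ t in Set.Ioi h₀, ENNReal.ofReal (G (x', t)) =
        ENNReal.ofReal (∫ t in a..b, (t - h₀) ^ α * |f' t| ^ p) := by
      rw [hsplit (fun t => G (x', t)) ?van1 ?van2]
      case van1 =>
        intro t ht hta
        have hd0 : fderiv ℝ u (x', t) = 0 := hder1 _ (hmemU t ht)
          (by show t - h₀ < ε; rw [hadef] at hta; linarith)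
        simp only [hG, hDu]
        rw [hd0]
        simp [Real.zero_rpow hpne]
      case van2 =>
        intro t htb
        have hd0 : fderiv ℝ u (x', t) = 0 := hder2 _ (hmemU t (lt_trans (lt_of_lt_of_le hh₀a hab.le) htb)) (by show M < t; linarith)
        simp only [hG, hDu]
        rw [hd0]
        simp [Real.zero_rpow hpne]
      rw [← hIoc _ hIGc (fun t ht => by
        have := sub_pos.2 (lt_trans hh₀a ht.1)
        positivity)]
      exact setLIntegral_congr_fun measurableSet_Ioc
        (fun t ht => by beta_reduce; rw [hkeyG t (lt_trans hh₀a ht.1)])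
    rw [hFeq, hGeq, ← ENNReal.ofReal_mul (Real.rpow_nonneg hC0 p)]
    exact ENNReal.ofReal_le_ofReal h1d
  -- Tonelli
  have hofFm : AEMeasurable (fun x => ENNReal.ofReal (F x)) (volume.restrict U) :=
    ENNReal.measurable_ofReal.comp_aemeasurable hFm.aemeasurable
  have hofGm : AEMeasurable (fun x => ENNReal.ofReal (G x)) (volume.restrict U) :=
    ENNReal.measurable_ofReal.comp_aemeasurable hGm.aemeasurable
  have htonelli : ∀ J : ((Fin n → ℝ) × ℝ) → ℝ≥0∞, AEMeasurable J (volume.restrict U) →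
      ∫⁻ x in U, J x = ∫⁻ x', ∫⁻ t, U.indicator J (x', t) := by
    intro J hJ
    rw [← lintegral_indicator hUmeas]
    have hind : AEMeasurable (U.indicator J) volume := (aemeasurable_indicator_iff hUmeas).2 hJ
    rw [Measure.volume_eq_prod] at hind ⊢
    exact lintegral_prod _ hind
  have hinner : ∀ (J : ((Fin n → ℝ) × ℝ) → ℝ≥0∞) (x' : Fin n → ℝ), ‖x'‖ < r →
      (∫⁻ t, U.indicator J (x', t)) = ∫⁻ t in Set.Ioi (h x'), J (x', t) := by
    intro J x' hx'
    rw [← lintegral_indicator measurableSet_Ioi]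
    congr 1
    funext t
    by_cases ht : h x' < t
    · rw [Set.indicator_of_mem ((hUmem _).2 ⟨hx', ht⟩), Set.indicator_of_mem (Set.mem_Ioi.2 ht)]
    · rw [Set.indicator_of_notMem (fun hm => ht ((hUmem _).1 hm).2),
        Set.indicator_of_notMem (by simpa using ht)]
  have hinner0 : ∀ (J : ((Fin n → ℝ) × ℝ) → ℝ≥0∞) (x' : Fin n → ℝ), ¬ ‖x'‖ < r →
      (∫⁻ t, U.indicator J (x', t)) = 0 := by
    intro J x' hx'
    have hz : ∀ t : ℝ, U.indicator J (x', t) = 0 := fun t =>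
      Set.indicator_of_notMem (fun hm => hx' ((hUmem _).1 hm).1) _
    simp [hz]
  have hmain : (∫⁻ x in U, ENNReal.ofReal (F x)) ≤
      ENNReal.ofReal ((p / |α - p + 1|) ^ p) * ∫⁻ x in U, ENNReal.ofReal (G x) := by
    rw [htonelli _ hofFm, htonelli _ hofGm, ← lintegral_const_mul' _ _ ENNReal.ofReal_ne_top]
    apply lintegral_mono
    intro x'
    beta_reduce
    by_cases hx' : ‖x'‖ < r
    · rw [hinner _ _ hx', hinner _ _ hx']
      exact hslice x' hx'
    · rw [hinner0 _ _ hx']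
      exact zero_le
  -- finiteness of the gradient term
  set tmax : ℝ := M - m₀ with htmax
  set cG : ℝ := ((ε ^ (α/p) + tmax ^ (α/p)) * D) ^ p with hcG
  have hGbound : ∀ᵐ x ∂(volume.restrict U),
      ENNReal.ofReal (G x) ≤ ENNReal.ofReal cG * K₀.indicator (fun _ => (1:ℝ≥0∞)) x := by
    apply (ae_restrict_mem hUmeas).mono
    intro x hx
    rcases lt_or_ge (x.2 - h x.1) ε with hlt | hge
    · have hz : G x = 0 := by
        simp only [hG, hDu]
        rw [hder1 x hx hlt]
        simp [Real.zero_rpow hpne]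
      rw [hz]
      simp
    rcases lt_or_ge M x.2 with hMx | hxM
    · have hz : G x = 0 := by
        simp only [hG, hDu]
        rw [hder2 x hx hMx]
        simp [Real.zero_rpow hpne]
      rw [hz]
      simp
    have hx1 : ‖x.1‖ ≤ r := le_of_lt ((hUmem x).1 hx).1
    have hm₀x : m₀ < h x.1 := hlow _ hx1
    have hw0 : (0:ℝ) < x.2 - h x.1 := hgpos x hx
    have hxK₀ : x ∈ K₀ := ⟨mem_closedBall_zero_iff.2 hx1, ⟨by linarith, hxM⟩⟩
    rw [Set.indicator_of_mem hxK₀, mul_one]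
    apply ENNReal.ofReal_le_ofReal
    have hwt : x.2 - h x.1 ≤ tmax := by rw [htmax]; linarith
    have hεt : ε ≤ tmax := le_trans hge hwt
    have htm0 : (0:ℝ) ≤ tmax := le_trans hε.le hεt
    have hWb0 : (0:ℝ) ≤ ε ^ (α/p) + tmax ^ (α/p) :=
      add_nonneg (Real.rpow_nonneg hε.le _) (Real.rpow_nonneg htm0 _)
    have hwbound : (x.2 - h x.1) ^ (α/p) ≤ ε ^ (α/p) + tmax ^ (α/p) := by
      rcases le_or_gt 0 (α/p) with hβ | hβ
      · have h1 : (x.2 - h x.1) ^ (α/p) ≤ tmax ^ (α/p) := Real.rpow_le_rpow hw0.le hwt hβ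
        have h2 : (0:ℝ) ≤ ε ^ (α/p) := Real.rpow_nonneg hε.le _
        linarith
      · have h1 : (x.2 - h x.1) ^ (α/p) ≤ ε ^ (α/p) :=
          Real.rpow_le_rpow_of_nonpos hε hge hβ.le
        have h2 : (0:ℝ) ≤ tmax ^ (α/p) := Real.rpow_nonneg htm0 _
        linarith
    have hDux : |Du x| ≤ D := by
      have h1 : ‖Du x‖ ≤ ‖fderiv ℝ u x‖ * ‖((0 : Fin n → ℝ), (1:ℝ))‖ := by
        rw [hDu]
        exact (fderiv ℝ u x).le_opNorm _
      have h2 : ‖((0 : Fin n → ℝ), (1:ℝ))‖ = 1 := by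
        simp [Prod.norm_def]
      rw [h2, mul_one, Real.norm_eq_abs] at h1
      exact le_trans h1 (hD x ⟨hx, hxK₀⟩)
    simp only [hG, hcG]
    apply Real.rpow_le_rpow (abs_nonneg _) ?_ hp0.le
    rw [abs_mul, abs_of_nonneg (Real.rpow_nonneg hw0.le _)]
    exact mul_le_mul hwbound hDux (abs_nonneg _) hWb0
  have hLGfin : (∫⁻ x in U, ENNReal.ofReal (G x)) ≠ ⊤ := by
    have hle : (∫⁻ x in U, ENNReal.ofReal (G x)) ≤
        ENNReal.ofReal cG * ((volume.restrict U) K₀) := by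
      calc (∫⁻ x in U, ENNReal.ofReal (G x))
          ≤ ∫⁻ x in U, ENNReal.ofReal cG * K₀.indicator (fun _ => (1:ℝ≥0∞)) x :=
            lintegral_mono_ae hGbound
        _ = ENNReal.ofReal cG * ∫⁻ x in U, K₀.indicator (fun _ => (1:ℝ≥0∞)) x :=
            lintegral_const_mul' _ _ ENNReal.ofReal_ne_top
        _ = ENNReal.ofReal cG * (volume.restrict U) K₀ := by
            rw [lintegral_indicator hK₀meas, setLIntegral_one]
    apply ne_top_of_le_ne_top ?_ hle
    apply ENNReal.mul_ne_top ENNReal.ofReal_ne_top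
    have hres : (volume.restrict U) K₀ ≤ volume K₀ := by
      rw [Measure.restrict_apply hK₀meas]
      exact measure_mono Set.inter_subset_left
    exact ne_top_of_le_ne_top hK₀c.measure_lt_top.ne hres
  -- conclusion
  rw [hFint, hGint]
  have h1 : (∫⁻ x in U, ENNReal.ofReal (F x)).toReal ≤
      (p / |α - p + 1|) ^ p * (∫⁻ x in U, ENNReal.ofReal (G x)).toReal := by
    have h2 := ENNReal.toReal_mono (ENNReal.mul_ne_top ENNReal.ofReal_ne_top hLGfin) hmain
    rwa [ENNReal.toReal_mul, ENNReal.toReal_ofReal (Real.rpow_nonneg hC0 p)] at h2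
  calc (∫⁻ x in U, ENNReal.ofReal (F x)).toReal ^ (1/p)
      ≤ ((p / |α - p + 1|) ^ p * (∫⁻ x in U, ENNReal.ofReal (G x)).toReal) ^ (1/p) :=
        Real.rpow_le_rpow ENNReal.toReal_nonneg h1 (by positivity)
    _ = (p / |α - p + 1|) * (∫⁻ x in U, ENNReal.ofReal (G x)).toReal ^ (1/p) := by
        rw [Real.mul_rpow (Real.rpow_nonneg hC0 _) ENNReal.toReal_nonneg,
          ← Real.rpow_mul hC0, mul_one_div, div_self hpne, Real.rpow_one]
end

section
/- Let $\gamma : [0,\ell] \to \mathbb{R}^2$, $\gamma(t) = (f_1(t), f_2(t))$, be a $C^1$ curve with $f_1(0) = f_2(0) = f_1(\ell) = f_2(\ell) = 0$, regular ($\dot\gamma \neq 0$), whose tangent argument $\phi$ is monotone with $|\phi(\ell) - \phi(0)| \leq 2\pi$. Then for every nonzero $\vec\alpha \in \mathbb{R}^2$ there do NOT exist points $0 \le t_1 < t_2 < t_3 < t_4 \le \ell$ and $c \in \mathbb{R}$ such that, with $g(t) = \vec\alpha \cdot \gamma(t)$, one has $g(t_1) > c$, $g(t_2) < c$, $g(t_3)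 > c$, $g(t_4) < c$. -/
open Real Set

/-! With `β` the argument of `α`, the derivative of `g = α ⬝ γ` is
`|α| |γ'(t)| cos (φ(t) - β)`, so its sign is that of `cos (φ(t) - β)`. Four alternations of `g`
about `c`, together with `g(0) = g(ℓ) = 0`, give five points between which `g` is alternately
increasing and decreasing, and the mean value theorem turns them into three sign changes of `g'`.
Since `φ` is monotone, these are three sign changes of `cos` on an interval of length at most
`|φ(ℓ) - φ(0)| ≤ 2π`, which is impossible: the zeros of `cos` are `π` apart, and three sign
changes need four consecutive half-periods of alternating sign, hence a span of more than `2π`. -/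

def HasThreeSignChangesOn (f : ℝ → ℝ) (a b : ℝ) : Prop :=
  ∃ x₁ x₂ x₃ x₄, a ≤ x₁ ∧ x₁ ≤ x₂ ∧ x₂ ≤ x₃ ∧ x₃ ≤ x₄ ∧ x₄ ≤ b ∧
    f x₁ * f x₂ < 0 ∧ f x₂ * f x₃ < 0 ∧ f x₃ * f x₄ < 0

namespace HasThreeSignChangesOn

variable {f w : ℝ → ℝ} {a b : ℝ}

theorem mono {a' b' : ℝ} (h : HasThreeSignChangesOn f a b) (ha : a' ≤ a) (hb : b ≤ b') :
    HasThreeSignChangesOn f a' b' := by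
  obtain ⟨x₁, x₂, x₃, x₄, h₁, h₁₂, h₂₃, h₃₄, h₄, c₁₂, c₂₃, c₃₄⟩ := h
  exact ⟨x₁, x₂, x₃, x₄, ha.trans h₁, h₁₂, h₂₃, h₃₄, h₄.trans hb, c₁₂, c₂₃, c₃₄⟩

theorem of_pos_mul (h : HasThreeSignChangesOn (fun t => w t * f t) a b)
    (hw : ∀ t ∈ Icc a b, 0 < w t) : HasThreeSignChangesOn f a b := by
  obtain ⟨x₁, x₂, x₃, x₄, h₁, h₁₂, h₂₃, h₃₄, h₄, c₁₂, c₂₃, c₃₄⟩ := h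
  have transfer : ∀ {x y}, x ∈ Icc a b → y ∈ Icc a b → w x * f x * (w y * f y) < 0 →
      f x * f y < 0 := fun hx hy hxy =>
    neg_of_mul_neg_right ((mul_mul_mul_comm _ _ _ _).symm.trans_lt hxy)
      (mul_pos (hw _ hx) (hw _ hy)).le
  exact ⟨x₁, x₂, x₃, x₄, h₁, h₁₂, h₂₃, h₃₄, h₄,
    transfer ⟨h₁, by linarith⟩ ⟨by linarith, by linarith⟩ c₁₂,
    transfer ⟨by linarith, by linarith⟩ ⟨by linarith, by linarith⟩ c₂₃,
    transfer ⟨by linarith, by linarith⟩ ⟨by linarith, h₄⟩ c₃₄⟩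

theorem comp_monotoneOn {φ : ℝ → ℝ} (h : HasThreeSignChangesOn (f ∘ φ) a b)
    (hφ : MonotoneOn φ (Icc a b)) : HasThreeSignChangesOn f (φ a) (φ b) := by
  obtain ⟨x₁, x₂, x₃, x₄, h₁, h₁₂, h₂₃, h₃₄, h₄, c₁₂, c₂₃, c₃₄⟩ := h
  have mono : ∀ {x y}, a ≤ x → x ≤ y → y ≤ b → φ x ≤ φ y := fun hx hxy hy =>
    hφ ⟨hx, hxy.trans hy⟩ ⟨hx.trans hxy, hy⟩ hxy
  exact ⟨φ x₁, φ x₂, φ x₃, φ x₄, mono le_rfl h₁ (by linarith), mono h₁ h₁₂ (by linarith),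
    mono (by linarith) h₂₃ (by linarith), mono (by linarith) h₃₄ h₄, mono (by linarith) h₄ le_rfl,
    c₁₂, c₂₃, c₃₄⟩

theorem comp_antitoneOn {φ : ℝ → ℝ} (h : HasThreeSignChangesOn (f ∘ φ) a b)
    (hφ : AntitoneOn φ (Icc a b)) : HasThreeSignChangesOn f (φ b) (φ a) := by
  obtain ⟨x₁, x₂, x₃, x₄, h₁, h₁₂, h₂₃, h₃₄, h₄, c₁₂, c₂₃, c₃₄⟩ := h
  have anti : ∀ {x y}, a ≤ x → x ≤ y → y ≤ b → φ y ≤ φ x := fun hx hxy hy =>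
    hφ ⟨hx, hxy.trans hy⟩ ⟨hx.trans hxy, hy⟩ hxy
  refine ⟨φ x₄, φ x₃, φ x₂, φ x₁, anti (by linarith) h₄ le_rfl, anti (by linarith) h₃₄ h₄,
    anti (by linarith) h₂₃ (by linarith), anti h₁ h₁₂ (by linarith), anti le_rfl h₁ (by linarith),
    (mul_comm _ _).trans_lt c₃₄, (mul_comm _ _).trans_lt c₂₃, (mul_comm _ _).trans_lt c₁₂⟩

end HasThreeSignChangesOn

namespace Real

theorem two_pi_lt_sub_of_cos_pos_neg_pos_neg_of_mem_Ico {x₁ x₂ x₃ x₄ : ℝ}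
    (hx₁ : x₁ ∈ Ico (-(π / 2)) (3 * π / 2)) (h₁₂ : x₁ ≤ x₂) (h₂₃ : x₂ ≤ x₃) (h₃₄ : x₃ ≤ x₄)
    (h₁ : 0 < cos x₁) (h₂ : cos x₂ < 0) (h₃ : 0 < cos x₃) (h₄ : cos x₄ < 0) :
    2 * π < x₄ - x₁ := by
  have hx₁' : x₁ < π / 2 := by
    by_contra! h
    linarith [cos_nonpos_of_pi_div_two_le_of_le h (by linarith [hx₁.2])]
  have hx₂ : π / 2 < x₂ := by
    by_contra! h
    linarith [cos_nonneg_of_neg_pi_div_two_le_of_le (by linarith [hx₁.1]) h]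
  have hx₃ : 3 * π / 2 < x₃ := by
    by_contra! h
    linarith [cos_nonpos_of_pi_div_two_le_of_le (hx₂.le.trans h₂₃) (by linarith)]
  have hx₄ : 5 * π / 2 < x₄ := by
    by_contra! h
    have := cos_nonneg_of_neg_pi_div_two_le_of_le (x := x₄ - 2 * π) (by linarith) (by linarith)
    linarith [cos_sub_two_pi x₄]
  linarith

theorem two_pi_lt_sub_of_cos_pos_neg_pos_neg {x₁ x₂ x₃ x₄ : ℝ}
    (h₁₂ : x₁ ≤ x₂) (h₂₃ : x₂ ≤ x₃) (h₃₄ : x₃ ≤ x₄)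
    (h₁ : 0 < cos x₁) (h₂ : cos x₂ < 0) (h₃ : 0 < cos x₃) (h₄ : cos x₄ < 0) :
    2 * π < x₄ - x₁ := by
  set k := toIcoDiv two_pi_pos (-(π / 2)) x₁
  have hk : x₁ - k * (2 * π) ∈ Ico (-(π / 2)) (3 * π / 2) := by
    have h := toIcoMod_mem_Ico two_pi_pos (-(π / 2)) x₁
    rw [← self_sub_toIcoDiv_zsmul, zsmul_eq_mul] at h
    exact ⟨h.1, by linarith [h.2]⟩
  have := two_pi_lt_sub_of_cos_pos_neg_pos_neg_of_mem_Ico (x₂ := x₂ - k * (2 * π))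
    (x₃ := x₃ - k * (2 * π)) (x₄ := x₄ - k * (2 * π)) hk (by linarith) (by linarith)
    (by linarith) (by rwa [cos_sub_int_mul_two_pi]) (by rwa [cos_sub_int_mul_two_pi])
    (by rwa [cos_sub_int_mul_two_pi]) (by rwa [cos_sub_int_mul_two_pi])
  linarith

theorem two_pi_lt_sub_of_hasThreeSignChangesOn_cos {a b : ℝ}
    (h : HasThreeSignChangesOn cos a b) : 2 * π < b - a := by
  obtain ⟨x₁, x₂, x₃, x₄, h₁, h₁₂, h₂₃, h₃₄, h₄, c₁₂, c₂₃, c₃₄⟩ := h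
  suffices 2 * π < x₄ - x₁ by linarith
  rcases lt_trichotomy 0 (cos x₁) with pos₁ | zero₁ | neg₁
  · have neg₂ := neg_of_mul_neg_right c₁₂ pos₁.le
    have pos₃ := pos_of_mul_neg_right c₂₃ neg₂.le
    exact two_pi_lt_sub_of_cos_pos_neg_pos_neg h₁₂ h₂₃ h₃₄ pos₁ neg₂ pos₃
      (neg_of_mul_neg_right c₃₄ pos₃.le)
  · simp [← zero₁] at c₁₂
  · -- `cos (x + π) = - cos x` reverses every sign
    have pos₂ := pos_of_mul_neg_right c₁₂ neg₁.le
    have neg₃ := neg_of_mul_neg_right c₂₃ pos₂.le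
    have := two_pi_lt_sub_of_cos_pos_neg_pos_neg (x₁ := x₁ + π) (x₂ := x₂ + π) (x₃ := x₃ + π)
      (x₄ := x₄ + π) (by linarith) (by linarith) (by linarith) (by rw [cos_add_pi]; linarith)
      (by rw [cos_add_pi]; linarith) (by rw [cos_add_pi]; linarith)
      (by rw [cos_add_pi]; linarith [pos_of_mul_neg_right c₃₄ neg₃.le])
    linarith

end Real

theorem hasThreeSignChangesOn_deriv_of_alternating {g g' : ℝ → ℝ} {u₀ u₁ u₂ u₃ u₄ : ℝ}
    (hg : ∀ t ∈ Icc u₀ u₄, HasDerivAt g (g' t) t)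
    (h₀₁ : u₀ < u₁) (h₁₂ : u₁ < u₂) (h₂₃ : u₂ < u₃) (h₃₄ : u₃ < u₄)
    (d₁ : (g u₁ - g u₀) * (g u₂ - g u₁) < 0) (d₂ : (g u₂ - g u₁) * (g u₃ - g u₂) < 0)
    (d₃ : (g u₃ - g u₂) * (g u₄ - g u₃) < 0) :
    HasThreeSignChangesOn g' u₀ u₄ := by
  have mvt : ∀ u v, u₀ ≤ u → u < v → v ≤ u₄ → ∃ s ∈ Ioo u v, g' s * (v - u) = g v - g u := by
    intro u v hu huv hv
    have hsub : Icc u v ⊆ Icc u₀ u₄ := Icc_subset_Icc hu hv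
    obtain ⟨s, hs, hslope⟩ := exists_hasDerivAt_eq_slope g g' huv
      (HasDerivAt.continuousOn fun t ht => hg t (hsub ht))
      (fun t ht => hg t (hsub (Ioo_subset_Icc_self ht)))
    exact ⟨s, hs, by rw [hslope, div_mul_cancel₀ _ (sub_ne_zero.2 huv.ne')]⟩
  have sign : ∀ {s s' l l' d d' : ℝ}, 0 < l → 0 < l' → g' s * l = d → g' s' * l' = d' →
      d * d' < 0 → g' s * g' s' < 0 := by
    intro s s' l l' d d' hl hl' e e' hd
    rw [← e, ← e', mul_mul_mul_comm] at hd
    exact neg_of_mul_neg_left hd (mul_pos hl hl').le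
  obtain ⟨s₁, hs₁, e₁⟩ := mvt u₀ u₁ le_rfl h₀₁ (by linarith)
  obtain ⟨s₂, hs₂, e₂⟩ := mvt u₁ u₂ h₀₁.le h₁₂ (by linarith)
  obtain ⟨s₃, hs₃, e₃⟩ := mvt u₂ u₃ (by linarith) h₂₃ h₃₄.le
  obtain ⟨s₄, hs₄, e₄⟩ := mvt u₃ u₄ (by linarith) h₃₄ le_rfl
  exact ⟨s₁, s₂, s₃, s₄, hs₁.1.le, (hs₁.2.trans hs₂.1).le, (hs₂.2.trans hs₃.1).le,
    (hs₃.2.trans hs₄.1).le, hs₄.2.le, sign (sub_pos.2 h₀₁) (sub_pos.2 h₁₂) e₁ e₂ d₁,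
    sign (sub_pos.2 h₁₂) (sub_pos.2 h₂₃) e₂ e₃ d₂, sign (sub_pos.2 h₂₃) (sub_pos.2 h₃₄) e₃ e₄ d₃⟩

theorem hasThreeSignChangesOn_deriv_of_four_alternations {g g' : ℝ → ℝ} {a b : ℝ}
    (hg : ∀ t ∈ Icc a b, HasDerivAt g (g' t) t) (ha : g a = 0) (hb : g b = 0)
    {t₁ t₂ t₃ t₄ c : ℝ} (h₁ : a ≤ t₁) (h₁₂ : t₁ < t₂) (h₂₃ : t₂ < t₃) (h₃₄ : t₃ < t₄)
    (h₄ : t₄ ≤ b) (hc₁ : c < g t₁) (hc₂ : g t₂ < c) (hc₃ : c < g t₃) (hc₄ : g t₄ < c) :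
    HasThreeSignChangesOn g' a b := by
  rcases le_or_gt 0 c with hc | hc
  · -- `g` rises from `g a = 0 ≤ c` to `g t₁`
    have ht₁ : a < t₁ := h₁.lt_of_ne (by rintro rfl; linarith)
    refine (hasThreeSignChangesOn_deriv_of_alternating
      (fun t ht => hg t ⟨ht.1, ht.2.trans h₄⟩) ht₁ h₁₂ h₂₃ h₃₄ ?_ ?_ ?_).mono le_rfl h₄
    · exact mul_neg_of_pos_of_neg (by linarith) (by linarith)
    · exact mul_neg_of_neg_of_pos (by linarith) (by linarith)
    · exact mul_neg_of_pos_of_neg (by linarith) (by linarith)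
  · -- `g` rises from `g t₄` to `g b = 0 > c`
    have ht₄ : t₄ < b := h₄.lt_of_ne (by rintro rfl; linarith)
    refine (hasThreeSignChangesOn_deriv_of_alternating
      (fun t ht => hg t ⟨h₁.trans ht.1, ht.2⟩) h₁₂ h₂₃ h₃₄ ht₄ ?_ ?_ ?_).mono h₁ le_rfl
    · exact mul_neg_of_neg_of_pos (by linarith) (by linarith)
    · exact mul_neg_of_pos_of_neg (by linarith) (by linarith)
    · exact mul_neg_of_neg_of_pos (by linarith) (by linarith)

theorem exists_pos_mul_cos_sin_eq {a : ℝ × ℝ} (ha : a ≠ 0) :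
    ∃ ρ β : ℝ, 0 < ρ ∧ a = (ρ * cos β, ρ * sin β) := by
  set z : ℂ := ⟨a.1, a.2⟩
  have hz : z ≠ 0 := fun h => ha (Prod.ext (congrArg Complex.re h) (congrArg Complex.im h))
  exact ⟨‖z‖, z.arg, norm_pos_iff.2 hz, by rw [Complex.norm_mul_cos_arg, Complex.norm_mul_sin_arg]⟩

theorem no_four_alternations_turn_le_two_pi_general (ℓ : ℝ)
    (γ γ' : ℝ → ℝ × ℝ) (r φ : ℝ → ℝ)
    (hderiv : ∀ t ∈ Icc 0 ℓ, HasDerivAt γ (γ' t) t)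
    (hreg : ∀ t ∈ Icc 0 ℓ, γ' t ≠ 0)
    (hr : ∀ t ∈ Icc 0 ℓ, r t = ‖γ' t‖)
    (hpolar : ∀ t ∈ Icc 0 ℓ, γ' t = (r t * Real.cos (φ t), r t * Real.sin (φ t)))
    (hmono : MonotoneOn φ (Icc 0 ℓ) ∨ AntitoneOn φ (Icc 0 ℓ))
    (hvar : |φ ℓ - φ 0| ≤ 2 * Real.pi)
    (hγ0 : γ 0 = (0, 0)) (hγℓ : γ ℓ = (0, 0))
    (a : ℝ × ℝ) (ha : a ≠ 0)
    (g : ℝ → ℝ) (hg : ∀ t, g t = a.1 * (γ t).1 + a.2 * (γ t).2) :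
    ¬ ∃ t1 t2 t3 t4 c : ℝ, 0 ≤ t1 ∧ t1 < t2 ∧ t2 < t3 ∧ t3 < t4 ∧ t4 ≤ ℓ ∧
        c < g t1 ∧ g t2 < c ∧ c < g t3 ∧ g t4 < c := by
  rintro ⟨t₁, t₂, t₃, t₄, c, h₀₁, h₁₂, h₂₃, h₃₄, h₄ℓ, hc₁, hc₂, hc₃, hc₄⟩
  obtain ⟨ρ, β, hρ, rfl⟩ := exists_pos_mul_cos_sin_eq ha
  set L : ℝ × ℝ →L[ℝ] ℝ := (ρ * cos β) • .fst ℝ ℝ ℝ + (ρ * sin β) • .snd ℝ ℝ ℝ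
  have hg' : ∀ t ∈ Icc 0 ℓ, HasDerivAt g (ρ * r t * cos (φ t - β)) t := by
    intro t ht
    rw [show g = L ∘ γ from funext fun t => by simp [hg, L]]
    refine (L.hasFDerivAt.comp_hasDerivAt t (hderiv t ht)).congr_deriv ?_
    simp only [L, hpolar t ht, cos_sub, add_apply, smul_apply, ContinuousLinearMap.coe_fst',
      ContinuousLinearMap.coe_snd', smul_eq_mul]
    ring
  have hcos : HasThreeSignChangesOn (cos ∘ fun t => φ t - β) 0 ℓ :=
    (hasThreeSignChangesOn_deriv_of_four_alternations hg' (by simp [hg, hγ0]) (by simp [hg, hγℓ])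
      h₀₁ h₁₂ h₂₃ h₃₄ h₄ℓ hc₁ hc₂ hc₃ hc₄).of_pos_mul (w := fun t => ρ * r t)
      fun t ht => mul_pos hρ (by rw [hr t ht]; exact norm_pos_iff.2 (hreg t ht))
  rcases hmono with hφ | hφ
  · have := two_pi_lt_sub_of_hasThreeSignChangesOn_cos
      (hcos.comp_monotoneOn fun x hx y hy hxy => sub_le_sub_right (hφ hx hy hxy) β)
    linarith [le_abs_self (φ ℓ - φ 0)]
  · have := two_pi_lt_sub_of_hasThreeSignChangesOn_cos
      (hcos.comp_antitoneOn fun x hx y hy hxy => sub_le_sub_right (hφ hx hy hxy) β)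
    linarith [neg_abs_le (φ ℓ - φ 0)]

/-- One-dimensional lemma behind the limited-view Jacobian theorem, case (a): a closed
regular `C¹` curve starting and ending at the origin whose tangent argument is monotone
with total variation at most `2π` admits no level `c` about which `g = α ⬝ γ` alternates
four times. -/
theorem no_four_alternations_turn_le_two_pi (ℓ : ℝ) (hℓ : 0 < ℓ)
    (γ γ' : ℝ → ℝ × ℝ) (r φ : ℝ → ℝ)
    (hderiv : ∀ t ∈ Icc 0 ℓ, HasDerivAt γ (γ' t) t)
    (hcont : ContinuousOn γ' (Icc 0 ℓ))
    (hreg : ∀ t ∈ Icc 0 ℓ, γ' t ≠ 0)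
    (hr : ∀ t ∈ Icc 0 ℓ, r t = ‖γ' t‖)
    (hφcont : ContinuousOn φ (Icc 0 ℓ))
    (hpolar : ∀ t ∈ Icc 0 ℓ, γ' t = (r t * Real.cos (φ t), r t * Real.sin (φ t)))
    (hmono : MonotoneOn φ (Icc 0 ℓ) ∨ AntitoneOn φ (Icc 0 ℓ))
    (hvar : |φ ℓ - φ 0| ≤ 2 * Real.pi)
    (hγ0 : γ 0 = (0, 0)) (hγℓ : γ ℓ = (0, 0))
    (a : ℝ × ℝ) (ha : a ≠ 0)
    (g : ℝ → ℝ) (hg : ∀ t, g t = a.1 * (γ t).1 + a.2 * (γ t).2) :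
    ¬ ∃ t1 t2 t3 t4 c : ℝ, 0 ≤ t1 ∧ t1 < t2 ∧ t2 < t3 ∧ t3 < t4 ∧ t4 ≤ ℓ ∧
        c < g t1 ∧ g t2 < c ∧ c < g t3 ∧ g t4 < c :=
  no_four_alternations_turn_le_two_pi_general ℓ γ γ' r φ hderiv hreg hr hpolar hmono hvar hγ0 hγℓ a
    ha g hg
end

section
/- Let $\gamma : [0,\ell] \to \mathbb{R}^2$ be a $C^1$ regular curve with $\gamma(0) = (0,0)$ (but possibly $\gamma(\ell) \neq 0$), whose tangent argument $\phi$ is monotone with $|\phi(\ell) - \phi(0)| \leq \pi$. Then for every nonzero $\vec\alpha \in \mathbb{R}^2$ there do not exist $0 \le t_1 < t_2 < t_3 < t_4 \le \ell$ and $c \in \mathbb{R}$ such that, with $g(t) = \vec\alpha \cdot \gamma(t)$, one has $g(t_1) > c$, $g(t_2) < c$, $g(t_3) > c$, $g(t_4) < c$. -/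
open Real Set

/-- Trig fact: a nonzero sinusoid `t ↦ a₁ cos t + a₂ sin t` cannot be negative,
positive, negative at three increasing points spanning at most `π`. -/
lemma no_neg_pos_neg_sinusoid (a : ℝ × ℝ) (ha : a ≠ 0) (x y z : ℝ)
    (hxy : x ≤ y) (hyz : y ≤ z) (hzx : z - x ≤ Real.pi)
    (hx : a.1 * Real.cos x + a.2 * Real.sin x < 0)
    (hy : 0 < a.1 * Real.cos y + a.2 * Real.sin y)
    (hz : a.1 * Real.cos z + a.2 * Real.sin z < 0) : False := by
  set h : ℝ → ℝ := fun t => a.1 * Real.cos t + a.2 * Real.sin t with hh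
  have hcont : Continuous h := by fun_prop
  have hx' : h x < 0 := hx
  have hy' : 0 < h y := hy
  have hz' : h z < 0 := hz
  -- zero p ∈ (x, y)
  have h0xy : (0 : ℝ) ∈ Icc (h x) (h y) := ⟨le_of_lt hx, le_of_lt hy⟩
  obtain ⟨p, hpmem, hp0⟩ := intermediate_value_Icc hxy hcont.continuousOn h0xy
  -- zero q ∈ (y, z)
  have h0yz : (0 : ℝ) ∈ Icc (h z) (h y) := ⟨le_of_lt hz, le_of_lt hy⟩
  obtain ⟨q, hqmem, hq0⟩ := intermediate_value_Icc' hyz hcont.continuousOn h0yz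
  have hpx : x < p := lt_of_le_of_ne hpmem.1 (by intro e; rw [← e] at hp0; linarith)
  have hpy : p < y := lt_of_le_of_ne hpmem.2 (by intro e; rw [e] at hp0; linarith)
  have hqy : y < q := lt_of_le_of_ne hqmem.1 (by intro e; rw [← e] at hq0; linarith)
  have hqz : q < z := lt_of_le_of_ne hqmem.2 (by intro e; rw [e] at hq0; linarith)
  have e1 : a.1 * Real.cos p + a.2 * Real.sin p = 0 := hp0
  have e2 : a.1 * Real.cos q + a.2 * Real.sin q = 0 := hq0
  have s1 : a.1 * Real.sin (q - p) = 0 := by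
    rw [Real.sin_sub]; linear_combination Real.sin q * e1 - Real.sin p * e2
  have s2 : a.2 * Real.sin (q - p) = 0 := by
    rw [Real.sin_sub]; linear_combination Real.cos p * e2 - Real.cos q * e1
  have hsin : 0 < Real.sin (q - p) :=
    Real.sin_pos_of_pos_of_lt_pi (by linarith) (by linarith)
  have ha1 : a.1 = 0 := by
    rcases mul_eq_zero.1 s1 with h' | h'
    · exact h'
    · exact absurd h' (ne_of_gt hsin)
  have ha2 : a.2 = 0 := by
    rcases mul_eq_zero.1 s2 with h' | h'
    · exact h'
    · exact absurd h' (ne_of_gt hsin)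
  exact ha (Prod.ext ha1 ha2)

/-- One-dimensional lemma behind the limited-view Jacobian theorem, case (b): a
regular `C¹` curve starting at the origin whose tangent argument is monotone
with total variation at most `π` admits no level `c` about which `g = α ⬝ γ` alternates
four times. -/
theorem no_four_alternations_turn_le_pi (ℓ : ℝ) (hℓ : 0 < ℓ)
    (γ γ' : ℝ → ℝ × ℝ) (r φ : ℝ → ℝ)
    (hderiv : ∀ t ∈ Icc 0 ℓ, HasDerivAt γ (γ' t) t)
    (hcont : ContinuousOn γ' (Icc 0 ℓ))
    (hreg : ∀ t ∈ Icc 0 ℓ, γ' t ≠ 0)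
    (hr : ∀ t ∈ Icc 0 ℓ, r t = ‖γ' t‖)
    (hφcont : ContinuousOn φ (Icc 0 ℓ))
    (hpolar : ∀ t ∈ Icc 0 ℓ, γ' t = (r t * Real.cos (φ t), r t * Real.sin (φ t)))
    (hmono : MonotoneOn φ (Icc 0 ℓ) ∨ AntitoneOn φ (Icc 0 ℓ))
    (hvar : |φ ℓ - φ 0| ≤ Real.pi)
    (hγ0 : γ 0 = (0, 0))
    (a : ℝ × ℝ) (ha : a ≠ 0)
    (g : ℝ → ℝ) (hg : ∀ t, g t = a.1 * (γ t).1 + a.2 * (γ t).2) :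
    ¬ ∃ t1 t2 t3 t4 c : ℝ, 0 ≤ t1 ∧ t1 < t2 ∧ t2 < t3 ∧ t3 < t4 ∧ t4 ≤ ℓ ∧
        c < g t1 ∧ g t2 < c ∧ c < g t3 ∧ g t4 < c := by
  rintro ⟨t1, t2, t3, t4, c, h01, h12, h23, h34, h4ℓ, hg1, hg2, hg3, hg4⟩
  set G' : ℝ → ℝ := fun t => a.1 * (γ' t).1 + a.2 * (γ' t).2 with hG'
  -- derivative of g
  have hgderiv : ∀ t ∈ Icc 0 ℓ, HasDerivAt g (G' t) t := by
    intro t ht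
    have h1 : HasDerivAt (fun u => (γ u).1) (γ' t).1 t :=
      ((ContinuousLinearMap.fst ℝ ℝ ℝ).hasFDerivAt).comp_hasDerivAt t (hderiv t ht)
    have h2 : HasDerivAt (fun u => (γ u).2) (γ' t).2 t :=
      ((ContinuousLinearMap.snd ℝ ℝ ℝ).hasFDerivAt).comp_hasDerivAt t (hderiv t ht)
    have h3 : HasDerivAt (fun u => a.1 * (γ u).1 + a.2 * (γ u).2) (G' t) t :=
      (h1.const_mul a.1).add (h2.const_mul a.2)
    have hfe : g = fun u => a.1 * (γ u).1 + a.2 * (γ u).2 := funext hg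
    rw [hfe]; exact h3
  have hgcont : ContinuousOn g (Icc 0 ℓ) := fun t ht =>
    (hgderiv t ht).continuousAt.continuousWithinAt
  -- membership helpers
  have ht1 : 0 ≤ t1 := h01
  have ht2ℓ : t2 ≤ ℓ := by linarith
  have ht3ℓ : t3 ≤ ℓ := by linarith
  have sub12 : Icc t1 t2 ⊆ Icc 0 ℓ := Icc_subset_Icc ht1 ht2ℓ
  have sub23 : Icc t2 t3 ⊆ Icc 0 ℓ := Icc_subset_Icc (by linarith) ht3ℓ
  have sub34 : Icc t3 t4 ⊆ Icc 0 ℓ := Icc_subset_Icc (by linarith) h4ℓ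
  -- mean value theorem on the three intervals
  obtain ⟨p, hpmem, hpslope⟩ := exists_hasDerivAt_eq_slope g G' h12
    (hgcont.mono sub12) (fun x hx => hgderiv x (sub12 (Ioo_subset_Icc_self hx)))
  obtain ⟨q, hqmem, hqslope⟩ := exists_hasDerivAt_eq_slope g G' h23
    (hgcont.mono sub23) (fun x hx => hgderiv x (sub23 (Ioo_subset_Icc_self hx)))
  obtain ⟨s, hsmem, hsslope⟩ := exists_hasDerivAt_eq_slope g G' h34
    (hgcont.mono sub34) (fun x hx => hgderiv x (sub34 (Ioo_subset_Icc_self hx)))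
  have hpIcc : p ∈ Icc 0 ℓ := sub12 (Ioo_subset_Icc_self hpmem)
  have hqIcc : q ∈ Icc 0 ℓ := sub23 (Ioo_subset_Icc_self hqmem)
  have hsIcc : s ∈ Icc 0 ℓ := sub34 (Ioo_subset_Icc_self hsmem)
  have hGp : G' p < 0 := by
    rw [hpslope]; apply div_neg_of_neg_of_pos <;> linarith
  have hGq : 0 < G' q := by
    rw [hqslope]; apply div_pos <;> linarith
  have hGs : G' s < 0 := by
    rw [hsslope]; apply div_neg_of_neg_of_pos <;> linarith
  -- convert to signs of the sinusoid at φ p, φ q, φ s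
  have key : ∀ t, t ∈ Icc 0 ℓ →
      G' t = r t * (a.1 * Real.cos (φ t) + a.2 * Real.sin (φ t)) := by
    intro t ht
    rw [hG']
    simp only [hpolar t ht]
    ring
  have hrpos : ∀ t, t ∈ Icc 0 ℓ → 0 < r t := by
    intro t ht
    rw [hr t ht]
    exact norm_pos_iff.mpr (hreg t ht)
  have hp : a.1 * Real.cos (φ p) + a.2 * Real.sin (φ p) < 0 := by
    have := key p hpIcc; have := hrpos p hpIcc; nlinarith
  have hq : 0 < a.1 * Real.cos (φ q) + a.2 * Real.sin (φ q) := by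
    have := key q hqIcc; have := hrpos q hqIcc; nlinarith
  have hs : a.1 * Real.cos (φ s) + a.2 * Real.sin (φ s) < 0 := by
    have := key s hsIcc; have := hrpos s hsIcc; nlinarith
  have h0ℓ : (0 : ℝ) ∈ Icc 0 ℓ := ⟨le_refl 0, le_of_lt hℓ⟩
  have hℓℓ : ℓ ∈ Icc 0 ℓ := ⟨le_of_lt hℓ, le_refl ℓ⟩
  have hpq : p ≤ q := by have := hpmem.2; have := hqmem.1; linarith
  have hqs : q ≤ s := by have := hqmem.2; have := hsmem.1; linarith
  rcases hmono with hm | hm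
  · have h1 : φ p ≤ φ q := hm hpIcc hqIcc hpq
    have h2 : φ q ≤ φ s := hm hqIcc hsIcc hqs
    have h3 : φ s - φ p ≤ Real.pi := by
      have l1 : φ 0 ≤ φ p := hm h0ℓ hpIcc hpIcc.1
      have l2 : φ s ≤ φ ℓ := hm hsIcc hℓℓ hsIcc.2
      have := le_abs_self (φ ℓ - φ 0)
      linarith
    exact no_neg_pos_neg_sinusoid a ha (φ p) (φ q) (φ s) h1 h2 h3 hp hq hs
  · have h1 : φ s ≤ φ q := hm hqIcc hsIcc hqs
    have h2 : φ q ≤ φ p := hm hpIcc hqIcc hpq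
    have h3 : φ p - φ s ≤ Real.pi := by
      have l1 : φ p ≤ φ 0 := hm h0ℓ hpIcc hpIcc.1
      have l2 : φ ℓ ≤ φ s := hm hsIcc hℓℓ hsIcc.2
      have := neg_abs_le (φ ℓ - φ 0)
      linarith
    exact no_neg_pos_neg_sinusoid a ha (φ s) (φ q) (φ p) h1 h2 h3 hs hq hp
end

section
/- Let $\phi : [0, \ell] \to \mathbb{R}$ be continuous and monotone with $|\phi(\ell) - \phi(0)| \leq \pi$, let $r : [0,\ell] \to (0, \infty)$ be continuous, and let $\beta \in \mathbb{R}$. Define $h(t) = r(t) \cos(\phi(t) - \beta)$. Then the zero set $Z = \{t \in [0,\ell] : h(t) = 0\}$ is either empty, a single closed interval, or the union of two closed intervals one of which contains $0$ and the other contains $\ell$; moreover $h$ has constant sign on each connected component of $[0,\ell] \setminus Z$ and the sign alternates between consecutive components. -/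
open Real Set

lemma sign_aux (c x y : ℝ) (hc : Real.cos c = 0) (hx : x ∈ Ioo (c - π) c)
    (hy : y ∈ Ioo c (c + π)) : Real.cos x * Real.cos y < 0 := by
  have hs2 : Real.sin c ^ 2 = 1 := by
    have := Real.sin_sq_add_cos_sq c; nlinarith
  have hX : Real.cos x = -Real.sin c * Real.sin (x - c) := by
    have hxe : x = c + (x - c) := by ring
    rw [hxe, Real.cos_add, hc]; ring_nf
  have hY : Real.cos y = -Real.sin c * Real.sin (y - c) := by
    have hye : y = c + (y - c) := by ring
    rw [hye, Real.cos_add, hc]; ring_nf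
  have h1 : Real.sin (x - c) < 0 :=
    Real.sin_neg_of_neg_of_neg_pi_lt (by linarith [hx.2]) (by linarith [hx.1])
  have h2 : 0 < Real.sin (y - c) :=
    Real.sin_pos_of_pos_of_lt_pi (by linarith [hy.1]) (by linarith [hy.2])
  rw [hX, hY]
  nlinarith [mul_pos (neg_pos.mpr h1) h2]

lemma cos_straddle (c x y : ℝ) (hc : Real.cos c = 0) (hxc : x ≤ c) (hcy : c ≤ y)
    (hyx : y - x ≤ π) (hx : Real.cos x ≠ 0) (hy : Real.cos y ≠ 0) :
    Real.cos x * Real.cos y < 0 := by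
  have hx1 : x < c := lt_of_le_of_ne hxc (by rintro rfl; exact hx hc)
  have hy1 : c < y := lt_of_le_of_ne hcy (by rintro rfl; exact hy hc)
  have hx2 : c - π < x := by
    rcases lt_or_ge (c - π) x with h | h
    · exact h
    · exfalso
      have : x = c - π := le_antisymm h (by linarith)
      apply hx
      rw [this, Real.cos_sub_pi, hc, neg_zero]
  have hy2 : y < c + π := by
    rcases lt_or_ge y (c + π) with h | h
    · exact h
    · exfalso
      have : y = c + π := le_antisymm (by linarith) h
      apply hy
      rw [this, Real.cos_add_pi, hc, neg_zero]
  exact sign_aux c x y hc ⟨hx2, hx1⟩ ⟨hy1, hy2⟩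

lemma struct_mono (ℓ : ℝ) (hℓ : 0 < ℓ) (φ : ℝ → ℝ) (β : ℝ)
    (hφcont : ContinuousOn φ (Icc 0 ℓ)) (hmono : MonotoneOn φ (Icc 0 ℓ))
    (hvar : φ ℓ - φ 0 ≤ π) (Z : Set ℝ)
    (hZ : Z = {t ∈ Icc 0 ℓ | Real.cos (φ t - β) = 0}) :
    Z = ∅ ∨ (∃ a b : ℝ, 0 ≤ a ∧ a ≤ b ∧ b ≤ ℓ ∧ Z = Icc a b) ∨
      (∃ a b : ℝ, 0 ≤ a ∧ a < b ∧ b ≤ ℓ ∧ Z = Icc 0 a ∪ Icc b ℓ) := by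
  have h0mem : (0:ℝ) ∈ Icc 0 ℓ := ⟨le_refl 0, hℓ.le⟩
  have hℓmem : ℓ ∈ Icc 0 ℓ := ⟨hℓ.le, le_refl ℓ⟩
  have hmemZ : ∀ u, u ∈ Z ↔ u ∈ Icc 0 ℓ ∧ Real.cos (φ u - β) = 0 := by
    intro u; rw [hZ]; exact Iff.rfl
  have hZsub : Z ⊆ Icc 0 ℓ := fun u hu => ((hmemZ u).mp hu).1
  have hlevel : ∀ s ∈ Z, ∀ t ∈ Z, s ≤ t → φ s ≠ φ t →
      φ s = φ 0 ∧ φ t = φ ℓ ∧ φ ℓ - φ 0 = π := by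
    intro s hs t ht hst hne
    obtain ⟨hsI, hsc⟩ := (hmemZ s).mp hs
    obtain ⟨htI, htc⟩ := (hmemZ t).mp ht
    obtain ⟨k, hk⟩ := Real.cos_eq_zero_iff.mp hsc
    obtain ⟨m, hm⟩ := Real.cos_eq_zero_iff.mp htc
    have hd : φ t - φ s = ((m:ℝ) - k) * π := by
      have he : ((m:ℝ) - k) * π = (2*(m:ℝ)+1)*π/2 - (2*(k:ℝ)+1)*π/2 := by ring
      rw [he, ← hk, ← hm]; ring
    have h0s : φ 0 ≤ φ s := hmono h0mem hsI hsI.1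
    have htℓ : φ t ≤ φ ℓ := hmono htI hℓmem htI.2
    have h1 : 0 < φ t - φ s := by
      have := hmono hsI htI hst
      cases lt_or_eq_of_le this with
      | inl h => linarith
      | inr h => exact absurd h hne
    have h2 : φ t - φ s ≤ π := by linarith
    have hk1 : (1:ℝ) ≤ (m:ℝ) - k := by
      have hz : (0:ℤ) < m - k := by
        by_contra hc
        push_neg at hc
        have : ((m:ℝ) - k) ≤ 0 := by
          have h' : ((m - k : ℤ) : ℝ) ≤ 0 := Int.cast_nonpos.mpr hc
          push_cast at h'; linarith
        nlinarith [Real.pi_pos]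
      have h1' : (1:ℤ) ≤ m - k := hz
      have h2' : ((1:ℤ) : ℝ) ≤ ((m - k : ℤ) : ℝ) := Int.cast_le.mpr h1'
      push_cast at h2'; linarith
    have hle1 : (m:ℝ) - k ≤ 1 := by nlinarith [Real.pi_pos]
    have hπ : φ t - φ s = π := by rw [hd, le_antisymm hle1 hk1, one_mul]
    exact ⟨by linarith, by linarith, by linarith⟩
  by_cases hne : Z = ∅
  · left; exact hne
  right
  have hZne : Z.Nonempty := nonempty_iff_ne_empty.mpr hne
  have hZclosed : IsClosed Z := by
    have hcont : ContinuousOn (fun t => Real.cos (φ t - β)) (Icc 0 ℓ) :=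
      Real.continuous_cos.comp_continuousOn (hφcont.sub continuousOn_const)
    have heq : Z = Icc 0 ℓ ∩ (fun t => Real.cos (φ t - β)) ⁻¹' {0} := by
      rw [hZ]; ext u; simp [Set.mem_setOf_eq]
    rw [heq]
    exact hcont.preimage_isClosed_of_isClosed isClosed_Icc isClosed_singleton
  have hZcomp : IsCompact Z := isCompact_Icc.of_isClosed_subset hZclosed hZsub
  by_cases hsplit : ∃ s ∈ Z, ∃ t ∈ Z, φ s ≠ φ t
  · right
    obtain ⟨s, hs, t, ht, hst⟩ := hsplit
    have hcos0 : Real.cos (φ 0 - β) = 0 ∧ Real.cos (φ ℓ - β) = 0 := by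
      rcases le_total s t with hle | hle
      · obtain ⟨h1, h2, _⟩ := hlevel s hs t ht hle hst
        exact ⟨h1 ▸ ((hmemZ s).mp hs).2, h2 ▸ ((hmemZ t).mp ht).2⟩
      · obtain ⟨h1, h2, _⟩ := hlevel t ht s hs hle hst.symm
        exact ⟨h1 ▸ ((hmemZ t).mp ht).2, h2 ▸ ((hmemZ s).mp hs).2⟩
    have hkey : φ ℓ - φ 0 = π := by
      rcases le_total s t with hle | hle
      · exact (hlevel s hs t ht hle hst).2.2
      · exact (hlevel t ht s hs hle hst.symm).2.2
    have h0Z : (0:ℝ) ∈ Z := (hmemZ 0).mpr ⟨h0mem, hcos0.1⟩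
    have hℓZ : ℓ ∈ Z := (hmemZ ℓ).mpr ⟨hℓmem, hcos0.2⟩
    have hchar : ∀ u ∈ Z, φ u = φ 0 ∨ φ u = φ ℓ := by
      intro u hu
      by_cases h0 : φ u = φ 0
      · exact Or.inl h0
      · exact Or.inr (hlevel 0 h0Z u hu (hZsub hu).1 (fun hh => h0 hh.symm)).2.1
    set A : Set ℝ := {u | u ∈ Icc 0 ℓ ∧ φ u ≤ φ 0} with hA
    set B : Set ℝ := {u | u ∈ Icc 0 ℓ ∧ φ ℓ ≤ φ u} with hB
    have hAsub : A ⊆ Icc 0 ℓ := fun u hu => hu.1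
    have hBsub : B ⊆ Icc 0 ℓ := fun u hu => hu.1
    have hAclosed : IsClosed A := by
      have heq : A = Icc 0 ℓ ∩ φ ⁻¹' (Iic (φ 0)) := by ext u; simp [hA]
      rw [heq]
      exact hφcont.preimage_isClosed_of_isClosed isClosed_Icc isClosed_Iic
    have hBclosed : IsClosed B := by
      have heq : B = Icc 0 ℓ ∩ φ ⁻¹' (Ici (φ ℓ)) := by ext u; simp [hB]
      rw [heq]
      exact hφcont.preimage_isClosed_of_isClosed isClosed_Icc isClosed_Ici
    have hAcomp : IsCompact A := isCompact_Icc.of_isClosed_subset hAclosed hAsub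
    have hBcomp : IsCompact B := isCompact_Icc.of_isClosed_subset hBclosed hBsub
    have h0A : (0:ℝ) ∈ A := ⟨h0mem, le_refl _⟩
    have hℓB : ℓ ∈ B := ⟨hℓmem, le_refl _⟩
    set a := sSup A with ha
    set b := sInf B with hb
    have haA : a ∈ A := hAcomp.sSup_mem ⟨0, h0A⟩
    have hbB : b ∈ B := hBcomp.sInf_mem ⟨ℓ, hℓB⟩
    have hφa : φ a = φ 0 := le_antisymm haA.2 (hmono h0mem haA.1 haA.1.1)
    have hφb : φ b = φ ℓ := le_antisymm (hmono hbB.1 hℓmem hbB.1.2) hbB.2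
    have hab : a < b := by
      rcases lt_or_ge a b with h | h
      · exact h
      · exfalso
        have := hmono hbB.1 haA.1 h
        rw [hφa, hφb] at this
        nlinarith [Real.pi_pos]
    have hbddA : BddAbove A := BddAbove.mono hAsub bddAbove_Icc
    have hbddB : BddBelow B := BddBelow.mono hBsub bddBelow_Icc
    refine ⟨a, b, haA.1.1, hab, hbB.1.2, ?_⟩
    ext u
    constructor
    · intro hu
      rcases hchar u hu with h0 | h1
      · exact Or.inl ⟨(hZsub hu).1, le_csSup hbddA ⟨hZsub hu, h0.le⟩⟩
      · exact Or.inr ⟨csInf_le hbddB ⟨hZsub hu, h1.ge⟩, (hZsub hu).2⟩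
    · intro hu
      rcases hu with hu | hu
      · have huI : u ∈ Icc 0 ℓ := ⟨hu.1, le_trans hu.2 haA.1.2⟩
        have hle : φ u ≤ φ 0 := by
          have := hmono huI haA.1 hu.2
          rw [hφa] at this; exact this
        have hφu : φ u = φ 0 := le_antisymm hle (hmono h0mem huI hu.1)
        exact (hmemZ u).mpr ⟨huI, by rw [hφu]; exact hcos0.1⟩
      · have huI : u ∈ Icc 0 ℓ := ⟨le_trans hbB.1.1 hu.1, hu.2⟩
        have hle : φ ℓ ≤ φ u := by
          have := hmono hbB.1 huI hu.1
          rw [hφb] at this; exact this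
        have hφu : φ u = φ ℓ := le_antisymm (hmono huI hℓmem huI.2) hle
        exact (hmemZ u).mpr ⟨huI, by rw [hφu]; exact hcos0.2⟩
  · left
    push_neg at hsplit
    set a := sInf Z with ha
    set b := sSup Z with hb
    have haZ : a ∈ Z := hZcomp.sInf_mem hZne
    have hbZ : b ∈ Z := hZcomp.sSup_mem hZne
    have hbddA : BddAbove Z := BddAbove.mono hZsub bddAbove_Icc
    have hbddB : BddBelow Z := BddBelow.mono hZsub bddBelow_Icc
    refine ⟨a, b, (hZsub haZ).1, le_csSup hbddA haZ, (hZsub hbZ).2, ?_⟩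
    ext u
    constructor
    · intro hu
      exact ⟨csInf_le hbddB hu, le_csSup hbddA hu⟩
    · intro hu
      have huI : u ∈ Icc 0 ℓ := ⟨le_trans (hZsub haZ).1 hu.1, le_trans hu.2 (hZsub hbZ).2⟩
      have hφab : φ a = φ b := hsplit a haZ b hbZ
      have h1 : φ a ≤ φ u := hmono (hZsub haZ) huI hu.1
      have h2 : φ u ≤ φ b := hmono huI (hZsub hbZ) hu.2
      have hφu : φ u = φ a := le_antisymm (hφab ▸ h2) h1
      exact (hmemZ u).mpr ⟨huI, by rw [hφu]; exact ((hmemZ a).mp haZ).2⟩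

/-- Structure of the zero set of `h(t) = r(t) cos(φ(t) - β)` for `φ` monotone with total
variation at most `π` and `r > 0`: the zero set is empty, a single closed interval, or
two closed intervals containing the respective endpoints; `h` has constant sign on each
component of the complement, alternating between consecutive components. -/
theorem zero_set_structure_cos_monotone (ℓ : ℝ) (hℓ : 0 < ℓ) (φ r : ℝ → ℝ) (β : ℝ)
    (hφcont : ContinuousOn φ (Icc 0 ℓ))
    (hmono : MonotoneOn φ (Icc 0 ℓ) ∨ AntitoneOn φ (Icc 0 ℓ))
    (hvar : |φ ℓ - φ 0| ≤ Real.pi)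
    (hrcont : ContinuousOn r (Icc 0 ℓ))
    (hrpos : ∀ t ∈ Icc 0 ℓ, 0 < r t)
    (h : ℝ → ℝ) (hh : ∀ t, h t = r t * Real.cos (φ t - β))
    (Z : Set ℝ) (hZ : Z = {t ∈ Icc 0 ℓ | h t = 0}) :
    (Z = ∅ ∨
      (∃ a b : ℝ, 0 ≤ a ∧ a ≤ b ∧ b ≤ ℓ ∧ Z = Icc a b) ∨
      (∃ a b : ℝ, 0 ≤ a ∧ a < b ∧ b ≤ ℓ ∧ Z = Icc 0 a ∪ Icc b ℓ)) ∧
    (∀ s ∈ Icc 0 ℓ, ∀ t ∈ Icc 0 ℓ, s < t → h s ≠ 0 → h t ≠ 0 →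
      (∀ z ∈ Ioo s t, h z ≠ 0) → 0 < h s * h t) ∧
    (∀ s ∈ Icc 0 ℓ, ∀ t ∈ Icc 0 ℓ, s < t → h s ≠ 0 → h t ≠ 0 →
      (∃ z ∈ Ioo s t, h z = 0) → h s * h t < 0) := by
  have hvar' := abs_le.mp hvar
  have hhcont : ContinuousOn h (Icc 0 ℓ) := by
    have : ContinuousOn (fun t => r t * Real.cos (φ t - β)) (Icc 0 ℓ) :=
      hrcont.mul (Real.continuous_cos.comp_continuousOn (hφcont.sub continuousOn_const))
    exact this.congr (fun u _ => hh u)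
  have hcosne : ∀ u ∈ Icc 0 ℓ, h u ≠ 0 → Real.cos (φ u - β) ≠ 0 := by
    intro u hu hne hc
    exact hne (by rw [hh u, hc, mul_zero])
  have hcoszero : ∀ u ∈ Icc 0 ℓ, h u = 0 → Real.cos (φ u - β) = 0 := by
    intro u hu h0
    rcases mul_eq_zero.mp (by rw [← hh u]; exact h0) with hr | hc
    · exact absurd hr (hrpos u hu).ne'
    · exact hc
  refine ⟨?_, ?_, ?_⟩
  · -- structure of the zero set
    have hZ' : Z = {t ∈ Icc 0 ℓ | Real.cos (φ t - β) = 0} := by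
      rw [hZ]; ext u
      constructor
      · rintro ⟨hu, h0⟩; exact ⟨hu, hcoszero u hu h0⟩
      · rintro ⟨hu, hc⟩; exact ⟨hu, by rw [hh u, hc, mul_zero]⟩
    rcases hmono with hm | hm
    · exact struct_mono ℓ hℓ φ β hφcont hm hvar'.2 Z hZ'
    · have hm' : MonotoneOn (fun t => -φ t) (Icc 0 ℓ) :=
        fun x hx y hy hxy => neg_le_neg (hm hx hy hxy)
    
      have hZ'' : Z = {t ∈ Icc 0 ℓ | Real.cos ((fun t => -φ t) t - (-β)) = 0} := by
        rw [hZ']; ext u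
        have : Real.cos ((fun t => -φ t) u - (-β)) = Real.cos (φ u - β) := by
          rw [show (fun t => -φ t) u - (-β) = -(φ u - β) by ring, Real.cos_neg]
        simp only [Set.mem_setOf_eq, this]
      have hcn : ContinuousOn (fun t => -φ t) (Icc 0 ℓ) := hφcont.neg
      exact struct_mono ℓ hℓ (fun t => -φ t) (-β) hcn hm' (by simp; linarith [hvar'.1]) Z hZ''
  · -- constant sign on components
    intro s hs t ht hst hs0 ht0 hnz
    have hcs : ContinuousOn h (Icc s t) := hhcont.mono (Icc_subset_Icc hs.1 ht.2)
    rcases (mul_ne_zero hs0 ht0).lt_or_gt with hlt | hgt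
    · exfalso
      rcases mul_neg_iff.mp hlt with ⟨hp, hn⟩ | ⟨hn, hp⟩
      · obtain ⟨z, hz, hz0⟩ := intermediate_value_Ioo' hst.le hcs ⟨hn, hp⟩
        exact hnz z hz hz0
      · obtain ⟨z, hz, hz0⟩ := intermediate_value_Ioo hst.le hcs ⟨hn, hp⟩
        exact hnz z hz hz0
    · exact hgt
  · -- sign change across a zero
    rintro s hs t ht hst hs0 ht0 ⟨z, hzIoo, hz0⟩
    have hzI : z ∈ Icc 0 ℓ := ⟨le_trans hs.1 hzIoo.1.le, le_trans hzIoo.2.le ht.2⟩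
    have hc : Real.cos (φ z - β) = 0 := hcoszero z hzI hz0
    have hcs : Real.cos (φ s - β) ≠ 0 := hcosne s hs hs0
    have hct : Real.cos (φ t - β) ≠ 0 := hcosne t ht ht0
    have hprod : h s * h t = (r s * r t) *
        (Real.cos (φ s - β) * Real.cos (φ t - β)) := by rw [hh s, hh t]; ring
    rcases hmono with hm | hm
    · have h1 : φ s - β ≤ φ z - β := by
        have := hm hs hzI hzIoo.1.le; linarith
      have h2 : φ z - β ≤ φ t - β := by
        have := hm hzI ht hzIoo.2.le; linarith
      have h3 : (φ t - β) - (φ s - β) ≤ π := by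
        have e1 := hm ⟨le_refl 0, hℓ.le⟩ hs hs.1
        have e2 := hm ht ⟨hℓ.le, le_refl ℓ⟩ ht.2
        linarith [hvar'.2]
      have := cos_straddle (φ z - β) (φ s - β) (φ t - β) hc h1 h2 h3 hcs hct
      rw [hprod]
      exact mul_neg_of_pos_of_neg (mul_pos (hrpos s hs) (hrpos t ht)) this
    · have h1 : φ t - β ≤ φ z - β := by
        have := hm hzI ht hzIoo.2.le; linarith
      have h2 : φ z - β ≤ φ s - β := by
        have := hm hs hzI hzIoo.1.le; linarith
      have h3 : (φ s - β) - (φ t - β) ≤ π := by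
        have e1 := hm ⟨le_refl 0, hℓ.le⟩ hs hs.1
        have e2 := hm ht ⟨hℓ.le, le_refl ℓ⟩ ht.2
        linarith [hvar'.1]
      have := cos_straddle (φ z - β) (φ t - β) (φ s - β) hc h1 h2 h3 hct hcs
      rw [hprod]
      have hcc : Real.cos (φ s - β) * Real.cos (φ t - β) < 0 := by
        rw [mul_comm]; exact this
      exact mul_neg_of_pos_of_neg (mul_pos (hrpos s hs) (hrpos t ht)) hcc
end
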